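/- arXiv:2202.07780 — 7 statements merged into one kernel-verified Lean document; each statement's English description precedes it below -/
import Mathlib

section
/- In the controlled SIR model with herd immunity not yet reached (S(t) ≥ γ/β for t ∈ [0,T]), the infectious share satisfies the lower bound I(t) ≥ I(0)·exp(−γ·∫₀ᵗ u(s) ds) ≥ I(0)·exp(−γ‖u‖₁) for all t ∈ [0,T]. -/
theorem stmt_5 (β γ T : ℝ) (hβ : 0 < β) (hγ : 0 < γ) (hT : 0 ≤ T)
    (S I u : ℝ → ℝ)
    (hSpos : ∀ t, 0 ≤ t → 0 < S t) (hIpos : ∀ t, 0 ≤ t → 0 < I t)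
    (hu01 : ∀ t, u t ∈ Set.Icc (0:ℝ) 1)
    (huint : MeasureTheory.IntegrableOn u (Set.Ici 0))
    (hS : ∀ t, 0 ≤ t → HasDerivAt S (-β * (1 - u t) * S t * I t) t)
    (hI : ∀ t, 0 ≤ t → HasDerivAt I (β * (1 - u t) * S t * I t - γ * I t) t)
    (hherd : ∀ t ∈ Set.Icc 0 T, γ / β ≤ S t) :
    ∀ t ∈ Set.Icc 0 T,
      I 0 * Real.exp (-γ * ∫ s in Set.Ici (0:ℝ), u s)
        ≤ I 0 * Real.exp (-γ * ∫ s in (0:ℝ)..t, u s) ∧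
      I 0 * Real.exp (-γ * ∫ s in (0:ℝ)..t, u s) ≤ I t := by
  intro t ht
  obtain ⟨ht0, htT⟩ := ht
  have hI0 := hIpos 0 le_rfl
  -- u interval integrable on [0,t]
  have huII : IntervalIntegrable u MeasureTheory.volume 0 t := by
    rw [intervalIntegrable_iff_integrableOn_Ioc_of_le ht0]
    exact huint.mono_set (fun x hx => hx.1.le)
  constructor
  · -- first inequality
    have h1 : (∫ s in (0:ℝ)..t, u s) ≤ ∫ s in Set.Ici (0:ℝ), u s := by
      rw [intervalIntegral.integral_of_le ht0]
      apply MeasureTheory.setIntegral_mono_set huint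
      · filter_upwards with x using (hu01 x).1
      · exact Filter.Eventually.of_forall (fun x hx => hx.1.le)
    have := mul_le_mul_of_nonpos_left h1 (neg_nonpos.mpr hγ.le)
    exact mul_le_mul_of_nonneg_left (Real.exp_le_exp.mpr this) hI0.le
  · -- main inequality
    set g : ℝ → ℝ := fun s => β * (1 - u s) * S s - γ with hg
    -- S is continuous on [0,t]
    have hScont : ContinuousOn S (Set.uIcc 0 t) := by
      intro x hx
      rw [Set.uIcc_of_le ht0] at hx
      exact ((hS x hx.1).continuousAt).continuousWithinAt
    have hgII : IntervalIntegrable g MeasureTheory.volume 0 t := by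
      have h1 : IntervalIntegrable (fun s => β * S s) MeasureTheory.volume 0 t := by
        exact (hScont.intervalIntegrable).const_mul β
      have h2 : IntervalIntegrable (fun s => u s * (β * S s)) MeasureTheory.volume 0 t :=
        huII.mul_continuousOn (hScont.const_smul β)
      have : g = fun s => β * S s - u s * (β * S s) - γ := by
        funext s; simp [hg]; ring
      rw [this]
      exact ((h1.sub h2).sub (intervalIntegrable_const))
    have hlog : ∀ x ∈ Set.uIcc 0 t, HasDerivAt (fun s => Real.log (I s)) (g x) x := by
      intro x hx
      rw [Set.uIcc_of_le ht0] at hx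
      have hd := (hI x hx.1).log (hIpos x hx.1).ne'
      convert hd using 1
      field_simp [hg, (hIpos x hx.1).ne']
      ring
    have hftc : (∫ s in (0:ℝ)..t, g s) = Real.log (I t) - Real.log (I 0) :=
      intervalIntegral.integral_eq_sub_of_hasDerivAt hlog hgII
    have hmono : (∫ s in (0:ℝ)..t, -γ * u s) ≤ ∫ s in (0:ℝ)..t, g s := by
      apply intervalIntegral.integral_mono_on ht0 (huII.const_mul (-γ)) hgII
      intro x hx
      have hu := hu01 x
      have hSx : γ / β ≤ S x := hherd x ⟨hx.1, hx.2.trans htT⟩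
      have h1u : (0:ℝ) ≤ 1 - u x := by linarith [hu.2]
      have : γ * (1 - u x) ≤ β * (1 - u x) * S x := by
        have := mul_le_mul_of_nonneg_left hSx (mul_nonneg hβ.le h1u)
        calc γ * (1 - u x) = β * (1 - u x) * (γ / β) := by field_simp
          _ ≤ β * (1 - u x) * S x := this
      simp only [hg]
      nlinarith
    rw [intervalIntegral.integral_const_mul] at hmono
    have hkey : Real.log (I 0) + -γ * ∫ s in (0:ℝ)..t, u s ≤ Real.log (I t) := by
      linarith [hftc ▸ hmono]
    calc I 0 * Real.exp (-γ * ∫ s in (0:ℝ)..t, u s)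
        = Real.exp (Real.log (I 0) + -γ * ∫ s in (0:ℝ)..t, u s) := by
          rw [Real.exp_add, Real.exp_log hI0]
      _ ≤ Real.exp (Real.log (I t)) := Real.exp_le_exp.mpr hkey
      _ = I t := Real.exp_log (hIpos t ht0)
end

section
/- For the controlled SIR model with initial state S(0) > γ/β and I(0) > 0, and any piecewise continuous control u with finite total cost ‖u‖₁ < ∞, the time t_H(u) = inf{t ≥ 0 : S(t) ≤ γ/β} to reach herd immunity is finite and bounded by ‖u‖₁ + (log(βS(0)/γ)/(βI(0)))·exp(γ‖u‖₁). -/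
theorem stmt_6 (β γ : ℝ) (hβ : 0 < β) (hγ : 0 < γ) (S I u : ℝ → ℝ)
    (hSpos : ∀ t, 0 ≤ t → 0 < S t) (hIpos : ∀ t, 0 ≤ t → 0 < I t)
    (hu01 : ∀ t, u t ∈ Set.Icc (0:ℝ) 1)
    (huint : MeasureTheory.IntegrableOn u (Set.Ici 0))
    (hS : ∀ t, 0 ≤ t → HasDerivAt S (-β * (1 - u t) * S t * I t) t)
    (hI : ∀ t, 0 ≤ t → HasDerivAt I (β * (1 - u t) * S t * I t - γ * I t) t)
    (hS0 : γ / β < S 0) :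
    (∃ t, 0 ≤ t ∧ S t ≤ γ / β) ∧
    sInf {t : ℝ | 0 ≤ t ∧ S t ≤ γ / β}
      ≤ (∫ s in Set.Ici (0:ℝ), u s)
        + Real.log (β * S 0 / γ) / (β * I 0)
          * Real.exp (γ * ∫ s in Set.Ici (0:ℝ), u s) := by
  set U : ℝ := ∫ s in Set.Ici (0:ℝ), u s with hU
  set A : ℝ := Real.log (β * S 0 / γ) with hA
  set T : ℝ := U + A / (β * I 0) * Real.exp (γ * U) with hT
  have hI0 : 0 < I 0 := hIpos 0 le_rfl
  have hS0pos : 0 < S 0 := hSpos 0 le_rfl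
  have hβS0 : γ < β * S 0 := (div_lt_iff₀' hβ).mp hS0
  have hApos : 0 < A := Real.log_pos (by rw [lt_div_iff₀ hγ]; linarith)
  have hUnn : 0 ≤ U := by
    apply MeasureTheory.setIntegral_nonneg measurableSet_Ici
    intro x _; exact (hu01 x).1
  have hTnn : 0 ≤ T := by
    have h1 : 0 ≤ A / (β * I 0) * Real.exp (γ * U) := by positivity
    rw [hT]; linarith
  -- interval integrability of u
  have huii : ∀ t : ℝ, 0 ≤ t → IntervalIntegrable u MeasureTheory.volume 0 t := by
    intro t ht
    rw [intervalIntegrable_iff_integrableOn_Ioc_of_le ht]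
    exact huint.mono_set (Set.Ioc_subset_Ioi_self.trans Set.Ioi_subset_Ici_self)
  have huleU : ∀ t : ℝ, 0 ≤ t → (∫ s in (0:ℝ)..t, u s) ≤ U := by
    intro t ht
    rw [intervalIntegral.integral_of_le ht]
    apply MeasureTheory.setIntegral_mono_set huint
    · filter_upwards with x using (hu01 x).1
    · exact HasSubset.Subset.eventuallyLE
        (Set.Ioc_subset_Ioi_self.trans Set.Ioi_subset_Ici_self)
  have hScont : ∀ t : ℝ, 0 ≤ t → ContinuousOn S (Set.Icc 0 t) :=
    fun t ht => fun x hx => ((hS x hx.1).continuousAt).continuousWithinAt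
  have hIcont : ∀ t : ℝ, 0 ≤ t → ContinuousOn I (Set.Icc 0 t) :=
    fun t ht => fun x hx => ((hI x hx.1).continuousAt).continuousWithinAt
  by_cases hex : ∃ t, 0 ≤ t ∧ t ≤ T ∧ S t ≤ γ / β
  · obtain ⟨t0, ht0, ht0T, ht0S⟩ := hex
    refine ⟨⟨t0, ht0, ht0S⟩, ?_⟩
    have hmem : t0 ∈ {t : ℝ | 0 ≤ t ∧ S t ≤ γ / β} := ⟨ht0, ht0S⟩
    have hbdd : BddBelow {t : ℝ | 0 ≤ t ∧ S t ≤ γ / β} := ⟨0, fun x hx => hx.1⟩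
    exact le_trans (csInf_le hbdd hmem) ht0T
  · exfalso
    push_neg at hex
    -- hex : ∀ t, 0 ≤ t → t ≤ T → γ / β < S t
    -- Step 1 : lower bound on I on [0, T]
    have hIlow : ∀ t : ℝ, 0 ≤ t → t ≤ T → I 0 * Real.exp (-(γ * U)) ≤ I t := by
      intro t ht htT
      have hftc : (∫ s in (0:ℝ)..t, (β * (1 - u s) * S s - γ))
          = Real.log (I t) - Real.log (I 0) := by
        apply intervalIntegral.integral_eq_sub_of_hasDerivAt
        · intro x hx
          rw [Set.uIcc_of_le ht] at hx
          have hx0 : 0 ≤ x := hx.1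
          have hd := (hI x hx0).log (hIpos x hx0).ne'
          refine hd.congr_deriv ?_
          rw [div_eq_iff (hIpos x hx0).ne']
          ring
        · have h2 : IntervalIntegrable (fun s => (1 - u s) * S s)
              MeasureTheory.volume 0 t := by
            apply IntervalIntegrable.mul_continuousOn
              ((intervalIntegrable_const).sub (huii t ht))
            rw [Set.uIcc_of_le ht]; exact hScont t ht
          have := ((h2.const_mul β).sub (intervalIntegrable_const (c := γ)))
          simpa [mul_assoc] using this
      have hmono : (∫ s in (0:ℝ)..t, (-γ) * u s)
          ≤ ∫ s in (0:ℝ)..t, (β * (1 - u s) * S s - γ) := by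
        apply intervalIntegral.integral_mono_on ht
        · exact (huii t ht).const_mul _
        · have h2 : IntervalIntegrable (fun s => (1 - u s) * S s)
              MeasureTheory.volume 0 t := by
            apply IntervalIntegrable.mul_continuousOn
              ((intervalIntegrable_const).sub (huii t ht))
            rw [Set.uIcc_of_le ht]; exact hScont t ht
          have := ((h2.const_mul β).sub (intervalIntegrable_const (c := γ)))
          simpa [mul_assoc] using this
        · intro s hs
          have hs0 : 0 ≤ s := hs.1
          have hsS : γ / β < S s := hex s hs0 (hs.2.trans htT)
          have h1u : 0 ≤ 1 - u s := by have := (hu01 s).2; linarith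
          have hβS : γ ≤ β * S s := le_of_lt ((div_lt_iff₀' hβ).mp hsS)
          nlinarith [mul_le_mul_of_nonneg_left hβS h1u]
      have hcalc : (∫ s in (0:ℝ)..t, (-γ) * u s) = -γ * ∫ s in (0:ℝ)..t, u s := by
        exact intervalIntegral.integral_const_mul _ _
      have hlog : Real.log (I 0) - γ * U ≤ Real.log (I t) := by
        have h1 : -γ * U ≤ -γ * ∫ s in (0:ℝ)..t, u s := by
          have := huleU t ht
          nlinarith
        rw [hcalc] at hmono
        linarith
      calc I 0 * Real.exp (-(γ * U))
          = Real.exp (Real.log (I 0) - γ * U) := by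
            rw [Real.exp_sub, Real.exp_log hI0, Real.exp_neg]; ring
        _ ≤ Real.exp (Real.log (I t)) := Real.exp_le_exp.mpr hlog
        _ = I t := Real.exp_log (hIpos t ht)
    -- Step 2 : upper bound on log S at T
    have hftcS : (∫ s in (0:ℝ)..T, -(β * (1 - u s) * I s))
        = Real.log (S T) - Real.log (S 0) := by
      apply intervalIntegral.integral_eq_sub_of_hasDerivAt
        (f := fun y => Real.log (S y)) (f' := fun s => -(β * (1 - u s) * I s))
      · intro x hx
        rw [Set.uIcc_of_le hTnn] at hx
        have hx0 : 0 ≤ x := hx.1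
        have hd := (hS x hx0).log (hSpos x hx0).ne'
        refine hd.congr_deriv ?_
        rw [div_eq_iff (hSpos x hx0).ne']
        ring
      · have h2 : IntervalIntegrable (fun s => (1 - u s) * I s)
            MeasureTheory.volume 0 T := by
          apply IntervalIntegrable.mul_continuousOn
            ((intervalIntegrable_const).sub (huii T hTnn))
          rw [Set.uIcc_of_le hTnn]; exact hIcont T hTnn
        have := (h2.const_mul β).neg
        simpa [mul_assoc, Pi.neg_def] using this
    have hmonoS : (∫ s in (0:ℝ)..T, -(β * (1 - u s) * I s))
        ≤ ∫ s in (0:ℝ)..T, -(β * (1 - u s) * (I 0 * Real.exp (-(γ * U)))) := by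
      apply intervalIntegral.integral_mono_on hTnn
      · have h2 : IntervalIntegrable (fun s => (1 - u s) * I s)
            MeasureTheory.volume 0 T := by
          apply IntervalIntegrable.mul_continuousOn
            ((intervalIntegrable_const).sub (huii T hTnn))
          rw [Set.uIcc_of_le hTnn]; exact hIcont T hTnn
        have := (h2.const_mul β).neg
        simpa [mul_assoc, Pi.neg_def] using this
      · have h2 : IntervalIntegrable (fun s => (1 - u s))
            MeasureTheory.volume 0 T :=
          (intervalIntegrable_const).sub (huii T hTnn)
        have := ((h2.const_mul β).mul_const (I 0 * Real.exp (-(γ * U)))).neg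
        simpa [mul_assoc, Pi.neg_def] using this
      · intro s hs
        have hs0 : 0 ≤ s := hs.1
        have h1u : 0 ≤ 1 - u s := by have := (hu01 s).2; linarith
        have hIl := hIlow s hs0 hs.2
        have hb : 0 ≤ β * (1 - u s) := by positivity
        nlinarith [mul_le_mul_of_nonneg_left hIl hb]
    have hcalcS : (∫ s in (0:ℝ)..T, -(β * (1 - u s) * (I 0 * Real.exp (-(γ * U)))))
        = -(β * (I 0 * Real.exp (-(γ * U)))) * (T - ∫ s in (0:ℝ)..T, u s) := by
      have : (fun s => -(β * (1 - u s) * (I 0 * Real.exp (-(γ * U)))))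
          = fun s => (-(β * (I 0 * Real.exp (-(γ * U))))) * (1 - u s) := by
        funext s; ring
      rw [this, intervalIntegral.integral_const_mul,
        intervalIntegral.integral_sub intervalIntegrable_const (huii T hTnn),
        intervalIntegral.integral_const]
      simp
    have hkey : Real.log (S T) ≤ Real.log (γ / β) := by
      have hEpos : (0:ℝ) < Real.exp (-(γ * U)) := Real.exp_pos _
      have hTU : T - U = A / (β * I 0) * Real.exp (γ * U) := by rw [hT]; ring
      have h1 : -(β * (I 0 * Real.exp (-(γ * U)))) * (T - ∫ s in (0:ℝ)..T, u s)
          ≤ -(β * (I 0 * Real.exp (-(γ * U)))) * (T - U) := by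
        have := huleU T hTnn
        have hc : 0 < β * (I 0 * Real.exp (-(γ * U))) := by positivity
        nlinarith
      have h2 : -(β * (I 0 * Real.exp (-(γ * U)))) * (T - U) = -A := by
        rw [hTU, Real.exp_neg]
        field_simp
      have h3 : Real.log (S T) - Real.log (S 0) ≤ -A := by
        calc Real.log (S T) - Real.log (S 0)
            = ∫ s in (0:ℝ)..T, -(β * (1 - u s) * I s) := hftcS.symm
          _ ≤ _ := hmonoS
          _ = _ := hcalcS
          _ ≤ -(β * (I 0 * Real.exp (-(γ * U)))) * (T - U) := h1
          _ = -A := h2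
      have h4 : Real.log (γ / β) = Real.log (S 0) - A := by
        rw [hA, Real.log_div (by positivity) hγ.ne', Real.log_mul hβ.ne' hS0pos.ne',
          Real.log_div hγ.ne' hβ.ne']
        ring
      linarith
    have : S T ≤ γ / β := by
      have := Real.exp_le_exp.mpr hkey
      rwa [Real.exp_log (hSpos T hTnn), Real.exp_log (by positivity)] at this
    exact absurd this (not_le.mpr (hex T hTnn le_rfl))
end

section
/- Uniform integrability of controlled infectious trajectories: for any β, γ > 0, any initial state with S(0), I(0) > 0, and any c₁ ≥ 0, there exist constants α, C, T* > 0 such that for every piecewise continuous control u : [0,∞) → [0,1] with ∫₀^∞ u ≤ c₁, the infectious trajectory satisfies ∫_T^∞ I_u(t) dt ≤ C·e^{−αT} for all T ≥ T*. -/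
open MeasureTheory Set Filter Real Topology

lemma hder_exp (b : ℝ) (hb : b ≠ 0) (s : ℝ) :
    HasDerivAt (fun x => -Real.exp (-b*x)/b) (Real.exp (-b*s)) s := by
  have h1 : HasDerivAt (fun x : ℝ => -b*x) (-b) s := by
    simpa using (hasDerivAt_id s).const_mul (-b)
  have h2 := (Real.hasDerivAt_exp (-b*s)).comp s h1
  have h3 := (h2.neg).div_const b
  exact h3.congr_deriv (by field_simp)

lemma int_exp_Ioi (b a : ℝ) (hb : 0 < b) :
    ∫ x in Ioi a, Real.exp (-b*x) = Real.exp (-b*a)/b := by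
  have h := integral_Ioi_of_hasDerivAt_of_tendsto' (f := fun x => -Real.exp (-b*x)/b)
    (f' := fun x => Real.exp (-b*x)) (m := 0) (a := a)
    (fun x _ => hder_exp b hb.ne' x) (exp_neg_integrableOn_Ioi a hb) ?_
  · rw [h]; ring
  · have h4 : Tendsto (fun x : ℝ => -b*x) atTop atBot := by
      simpa using (tendsto_id (α := ℝ) (x := atTop)).const_mul_atTop_of_neg (neg_neg_iff_pos.mpr hb)
    have : Tendsto (fun x : ℝ => Real.exp (-b*x)) atTop (𝓝 0) :=
      Real.tendsto_exp_atBot.comp h4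
    simpa using (this.neg.div_const b)

lemma int_exp_intval (b x y : ℝ) (hb : 0 < b) :
    ∫ s in x..y, Real.exp (-b*s) = (Real.exp (-b*x) - Real.exp (-b*y))/b := by
  rw [intervalIntegral.integral_eq_sub_of_hasDerivAt (fun s _ => hder_exp b hb.ne' s)]
  · ring
  · exact (Real.continuous_exp.comp (continuous_const.mul continuous_id)).intervalIntegrable x y

set_option maxHeartbeats 1600000 in
theorem stmt_9 (β γ S0 I0 c1 : ℝ) (hβ : 0 < β) (hγ : 0 < γ)
    (hS0 : 0 < S0) (hI0 : 0 < I0) (hsum : S0 + I0 ≤ 1) (hc1 : 0 ≤ c1) :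
    ∃ α C Tstar : ℝ, 0 < α ∧ 0 < C ∧ 0 < Tstar ∧
      ∀ u S I : ℝ → ℝ,
        (∀ t, u t ∈ Set.Icc (0:ℝ) 1) →
        MeasureTheory.IntegrableOn u (Set.Ici 0) →
        (∫ t in Set.Ici (0:ℝ), u t) ≤ c1 →
        S 0 = S0 → I 0 = I0 →
        (∀ t, 0 ≤ t → 0 < S t) → (∀ t, 0 ≤ t → 0 < I t) →
        (∀ t, 0 ≤ t → HasDerivAt S (-β * (1 - u t) * S t * I t) t) →
        (∀ t, 0 ≤ t → HasDerivAt I (β * (1 - u t) * S t * I t - γ * I t) t) →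
        ∀ T, Tstar ≤ T → ∫ t in Set.Ioi T, I t ≤ C * Real.exp (-α * T) := by
  obtain ⟨E, hE⟩ : ∃ x : ℝ, x = Real.exp (-(β*c1)) := ⟨_, rfl⟩
  have hEpos : 0 < E := hE ▸ Real.exp_pos _
  obtain ⟨δ, hδdef⟩ : ∃ x : ℝ, x = γ * I0 * E / 4 := ⟨_, rfl⟩
  have hδ : 0 < δ := by rw [hδdef]; positivity
  obtain ⟨T1, hT1def⟩ : ∃ x : ℝ, x = Real.log 2 / δ := ⟨_, rfl⟩
  have hT1 : 0 < T1 := hT1def ▸ div_pos (Real.log_pos one_lt_two) hδ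
  refine ⟨δ, Real.exp (δ*T1)/δ, T1, hδ, by positivity, hT1, ?_⟩
  intro u S I hu hInt hIc hS00 hI00 hSpos hIpos hS' hI'
  have hScont : ContinuousOn S (Ici 0) := fun t ht => ((hS' t ht).continuousAt).continuousWithinAt
  have hIcont : ContinuousOn I (Ici 0) := fun t ht => ((hI' t ht).continuousAt).continuousWithinAt
  -- S antitone
  have hSanti : AntitoneOn S (Ici 0) := by
    apply antitoneOn_of_deriv_nonpos (convex_Ici 0) hScont
    · intro x hx
      rw [interior_Ici] at hx
      exact (hS' x (le_of_lt hx)).differentiableAt.differentiableWithinAt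
    · intro x hx
      rw [interior_Ici] at hx
      rw [(hS' x hx.le).deriv]
      have h1 := (hu x).2
      have h2 := hSpos x hx.le
      have h3 := hIpos x hx.le
      have h4 : 0 ≤ (1 - u x) * (S x * I x) :=
        mul_nonneg (by linarith) (mul_pos h2 h3).le
      nlinarith
  -- S + I antitone
  have hSIanti : AntitoneOn (fun t => S t + I t) (Ici 0) := by
    apply antitoneOn_of_deriv_nonpos (convex_Ici 0) (hScont.add hIcont)
    · intro x hx
      rw [interior_Ici] at hx
      exact ((hS' x hx.le).add (hI' x hx.le)).differentiableAt.differentiableWithinAt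
    · intro x hx
      rw [interior_Ici] at hx
      rw [((hS' x hx.le).add (hI' x hx.le)).deriv]
      have h3 := hIpos x hx.le
      nlinarith
  have hsum' : ∀ t, 0 ≤ t → S t + I t ≤ 1 := by
    intro t ht
    have := hSIanti (self_mem_Ici) (mem_Ici.mpr ht) ht
    simp only [hS00, hI00] at this
    linarith
  have hSle1 : ∀ t, 0 ≤ t → S t ≤ 1 := fun t ht => by
    have := hsum' t ht; have := hIpos t ht; linarith
  have hIle1 : ∀ t, 0 ≤ t → I t ≤ 1 := fun t ht => by
    have := hsum' t ht; have := hSpos t ht; linarith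
  -- interval integrability of I
  have hIint : ∀ a b : ℝ, 0 ≤ a → a ≤ b → IntervalIntegrable I volume a b := by
    intro a b ha hab
    apply ContinuousOn.intervalIntegrable
    apply hIcont.mono
    rw [uIcc_of_le hab]
    exact fun x hx => le_trans ha hx.1
  -- cumulative bound
  have hcum : ∀ b, 0 ≤ b → ∫ t in (0:ℝ)..b, I t ≤ 1/γ := by
    intro b hb
    have hftc : ∫ t in (0:ℝ)..b, (-γ) * I t = (S b + I b) - (S 0 + I 0) := by
      apply intervalIntegral.integral_eq_sub_of_hasDerivAt
      · intro t ht
        rw [uIcc_of_le hb] at ht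
        have h1 := (hS' t ht.1).add (hI' t ht.1)
        exact h1.congr_deriv (by ring)
      · exact (hIint 0 b le_rfl hb).const_mul (-γ)
    rw [intervalIntegral.integral_const_mul] at hftc
    have hSIb := hSpos b hb
    have hIb := hIpos b hb
    rw [hS00, hI00] at hftc
    rw [le_div_iff₀ hγ]
    nlinarith
  -- control integral bound
  have huc : ∀ b, 0 ≤ b → ∫ t in (0:ℝ)..b, u t ≤ c1 := by
    intro b hb
    rw [intervalIntegral.integral_of_le hb]
    refine le_trans (setIntegral_mono_set hInt (ae_of_all _ fun t => (hu t).1) ?_) hIc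
    exact HasSubset.Subset.eventuallyLE (fun x hx => le_of_lt hx.1)
  have huint : ∀ a b : ℝ, 0 ≤ a → a ≤ b → IntervalIntegrable u volume a b := by
    intro a b ha hab
    rw [intervalIntegrable_iff_integrableOn_Ioc_of_le hab]
    exact hInt.mono_set (fun x hx => le_trans ha (le_of_lt hx.1))
  -- log I derivative
  set g : ℝ → ℝ := fun t => β * (1 - u t) * S t - γ with hg
  have hgln : ∀ t, 0 ≤ t → HasDerivAt (fun s => Real.log (I s)) (g t) t := by
    intro t ht
    have h := (hI' t ht).log (hIpos t ht).ne'
    convert h using 1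
    field_simp [(hIpos t ht).ne']
    ring
  have hgint : ∀ a b : ℝ, 0 ≤ a → a ≤ b → IntervalIntegrable g volume a b := by
    intro a b ha hab
    rw [intervalIntegrable_iff_integrableOn_Ioc_of_le hab]
    have hsub : Ioc a b ⊆ Ici 0 := fun x hx => le_trans ha (le_of_lt hx.1)
    have hu' : IntegrableOn u (Ioc a b) := hInt.mono_set hsub
    have h1 : IntegrableOn (fun t => S t * u t) (Ioc a b) := by
      apply Integrable.bdd_mul (c := 1) hu'
        ((hScont.mono hsub).aestronglyMeasurable measurableSet_Ioc)
      refine (ae_restrict_iff' measurableSet_Ioc).mpr (ae_of_all _ fun x hx => ?_)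
      rw [Real.norm_eq_abs, abs_of_pos (hSpos x (hsub hx))]
      exact hSle1 x (hsub hx)
    have h2 : IntegrableOn (fun t => β * S t - γ) (Ioc a b) := by
      apply IntegrableOn.mono_set ?_ (Ioc_subset_Icc_self (a := a) (b := b))
      apply ContinuousOn.integrableOn_Icc
      exact (continuousOn_const.mul (hScont.mono (fun x hx => le_trans ha hx.1))).sub
        continuousOn_const
    have heq : g = fun t => (β * S t - γ) - β * (S t * u t) := by
      funext t; simp only [hg]; ring
    rw [heq]
    exact h2.sub (h1.const_mul β)
  have hlog : ∀ a b : ℝ, 0 ≤ a → a ≤ b →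
      Real.log (I b) - Real.log (I a) = ∫ t in a..b, g t := by
    intro a b ha hab
    rw [intervalIntegral.integral_eq_sub_of_hasDerivAt
      (fun t ht => hgln t (by rw [uIcc_of_le hab] at ht; exact le_trans ha ht.1))
      (hgint a b ha hab)]
  -- key claim
  have hkey : ∀ t, T1 ≤ t → β * S t < γ - δ := by
    intro t1 ht1
    by_contra hcon
    push_neg at hcon
    have ht1' : 0 ≤ t1 := le_trans hT1.le ht1
    have hIlow : ∀ s, 0 ≤ s → s ≤ t1 → I0 * E * Real.exp (-δ*s) ≤ I s := by
      intro s hs hst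
      have hlog0 := hlog 0 s le_rfl hs
      have hmono : ∫ x in (0:ℝ)..s, (-δ - β * u x) ≤ ∫ x in (0:ℝ)..s, g x := by
        apply intervalIntegral.integral_mono_on hs
          ((intervalIntegrable_const).sub ((huint 0 s le_rfl hs).const_mul β))
          (hgint 0 s le_rfl hs)
        intro x hx
        have hx0 : 0 ≤ x := hx.1
        have hxle : x ≤ t1 := le_trans hx.2 hst
        have hSm := hSanti (mem_Ici.mpr hx0) (mem_Ici.mpr ht1') hxle
        have hSx : γ - δ ≤ β * S x := le_trans hcon (by nlinarith)
        have hux := (hu x).1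
        have hS1 := hSle1 x hx0
        have hSp := hSpos x hx0
        have h9 : 0 ≤ β * (u x * (1 - S x)) :=
          mul_nonneg hβ.le (mul_nonneg hux (by linarith))
        simp only [hg]
        nlinarith [h9, hSx]
      have hlhs : ∫ x in (0:ℝ)..s, (-δ - β * u x) = -δ*s - β * ∫ x in (0:ℝ)..s, u x := by
        rw [intervalIntegral.integral_sub intervalIntegrable_const
          ((huint 0 s le_rfl hs).const_mul β), intervalIntegral.integral_const_mul,
          intervalIntegral.integral_const]
        simp
        ring
      have hub := huc s hs
      have hfin : Real.log I0 + (-(β*c1)) + (-δ*s) ≤ Real.log (I s) := by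
        rw [hI00] at hlog0
        nlinarith [hmono, hlhs, hlog0, hub]
      calc I0 * E * Real.exp (-δ*s)
          = Real.exp (Real.log I0 + (-(β*c1)) + (-δ*s)) := by
            rw [Real.exp_add, Real.exp_add, Real.exp_log hI0, hE]
        _ ≤ Real.exp (Real.log (I s)) := Real.exp_le_exp.mpr hfin
        _ = I s := Real.exp_log (hIpos s hs)
    have hlow2 : I0 * E * ((1 - Real.exp (-δ*t1))/δ) ≤ ∫ x in (0:ℝ)..t1, I x := by
      have hint : ∫ x in (0:ℝ)..t1, I0 * E * Real.exp (-δ*x) ≤ ∫ x in (0:ℝ)..t1, I x := by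
        apply intervalIntegral.integral_mono_on ht1'
          (((Real.continuous_exp.comp (continuous_const.mul continuous_id)).intervalIntegrable
            0 t1).const_mul (I0 * E))
          (hIint 0 t1 le_rfl ht1')
        exact fun x hx => hIlow x hx.1 hx.2
      rw [intervalIntegral.integral_const_mul, int_exp_intval δ 0 t1 hδ] at hint
      simpa using hint
    have hup := hcum t1 ht1'
    have hexp : Real.exp (-δ*t1) ≤ 1/2 := by
      have ht1c : Real.log 2 / δ ≤ t1 := hT1def ▸ ht1
      have hl2 : Real.log 2 ≤ t1 * δ := (div_le_iff₀ hδ).mp ht1c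
      calc Real.exp (-δ*t1) ≤ Real.exp (-Real.log 2) :=
            Real.exp_le_exp.mpr (by linarith)
        _ = 1/2 := by rw [Real.exp_neg, Real.exp_log]; · norm_num
                      · norm_num
    have hchain : I0 * E * ((1 - Real.exp (-δ*t1))/δ) ≤ 1/γ := le_trans hlow2 hup
    have hδγ : δ * (1/γ) = I0 * E / 4 := by
      rw [hδdef]; field_simp
    have hX : (1:ℝ)/2 ≤ 1 - Real.exp (-δ*t1) := by linarith
    have h1 := mul_le_mul_of_nonneg_left hchain hδ.le
    have h2 : δ * (I0 * E * ((1 - Real.exp (-δ*t1))/δ)) =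
        I0 * E * (1 - Real.exp (-δ*t1)) := by
      field_simp
    have h3 := mul_le_mul_of_nonneg_left hX (mul_pos hI0 hEpos).le
    nlinarith [mul_pos hI0 hEpos]
  -- decay
  have hdecay : ∀ t, T1 ≤ t → I t ≤ Real.exp (δ*T1) * Real.exp (-δ*t) := by
    intro t ht
    have ht0 : 0 ≤ t := le_trans hT1.le ht
    have hb : Real.log (I t) - Real.log (I T1) = ∫ s in T1..t, g s := hlog T1 t hT1.le ht
    have hmono : ∫ s in T1..t, g s ≤ ∫ s in T1..t, (-δ : ℝ) := by
      apply intervalIntegral.integral_mono_on ht (hgint T1 t hT1.le ht) intervalIntegrable_const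
      intro x hx
      have hx0 : 0 ≤ x := le_trans hT1.le hx.1
      have hk := hkey x hx.1
      have h1 : β*(1-u x)*S x ≤ β * S x := by
        have h9 : 0 ≤ β * (u x * S x) :=
          mul_nonneg hβ.le (mul_nonneg (hu x).1 (hSpos x hx0).le)
        nlinarith [h9]
      simp only [hg]
      linarith
    rw [intervalIntegral.integral_const, smul_eq_mul] at hmono
    have hIT1 : Real.log (I T1) ≤ 0 := Real.log_nonpos (hIpos T1 hT1.le).le (hIle1 T1 hT1.le)
    have hlt : Real.log (I t) ≤ δ*T1 + (-δ*t) := by nlinarith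
    calc I t = Real.exp (Real.log (I t)) := (Real.exp_log (hIpos t ht0)).symm
      _ ≤ Real.exp (δ*T1 + (-δ*t)) := Real.exp_le_exp.mpr hlt
      _ = Real.exp (δ*T1) * Real.exp (-δ*t) := Real.exp_add _ _
  -- conclusion
  intro T hT
  have hT0 : 0 ≤ T := le_trans hT1.le hT
  have hIoisub : Ioi T ⊆ Ici (0:ℝ) := fun x hx => le_trans hT0 (le_of_lt hx)
  have hexpint : IntegrableOn (fun t => Real.exp (δ*T1) * Real.exp (-δ*t)) (Ioi T) :=
    (exp_neg_integrableOn_Ioi T hδ).const_mul _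
  have hIintOn : IntegrableOn I (Ioi T) := by
    apply Integrable.mono' hexpint
      ((hIcont.mono hIoisub).aestronglyMeasurable measurableSet_Ioi)
    refine (ae_restrict_iff' measurableSet_Ioi).mpr (ae_of_all _ fun x hx => ?_)
    rw [Real.norm_eq_abs, abs_of_pos (hIpos x (hIoisub hx))]
    exact hdecay x (le_trans hT (le_of_lt hx))
  have hmono2 : ∫ t in Ioi T, I t ≤ ∫ t in Ioi T, Real.exp (δ*T1) * Real.exp (-δ*t) := by
    apply setIntegral_mono_on hIintOn hexpint measurableSet_Ioi
    exact fun x hx => hdecay x (le_trans hT (le_of_lt hx))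
  rw [MeasureTheory.integral_const_mul, int_exp_Ioi δ T hδ] at hmono2
  calc ∫ t in Ioi T, I t ≤ Real.exp (δ*T1) * (Real.exp (-δ*T)/δ) := hmono2
    _ = Real.exp (δ*T1)/δ * Real.exp (-δ*T) := by ring
end

section
/- Weak approximation by quantization: for any b, h > 0, any u : [0,∞) → [0,b] piecewise continuous, any t ≥ 0, and any function φ that is bounded by M on [0,t] and Lipschitz with constant L on [0,t], the quantized control û = Q_{b,h}u satisfies |∫₀ᵗ (û(s) − u(s))·φ(s) ds| ≤ b·h·(M + t·L). -/
open Classical in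
/-- Frequency-modulated quantization `Q_{b,h} u`. -/
noncomputable def quantize (b h : ℝ) (u : ℝ → ℝ) : ℝ → ℝ := fun t =>
  if ∃ k : ℕ, 1 ≤ k ∧
      h * k - b⁻¹ * (∫ s in (h * ((k : ℝ) - 1))..(h * k), u s) ≤ t ∧ t < h * k
  then b else 0

open MeasureTheory Set

noncomputable def tauQ (b h : ℝ) (u : ℝ → ℝ) (k : ℕ) : ℝ :=
  b⁻¹ * (∫ s in (h * ((k : ℝ) - 1))..(h * k), u s)

lemma quantize_mem (b h : ℝ) (u : ℝ → ℝ) (hb : 0 ≤ b) (s : ℝ) :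
    quantize b h u s ∈ Set.Icc 0 b := by
  unfold quantize
  split <;> simp [hb]

lemma quantize_measurable (b h : ℝ) (u : ℝ → ℝ) : Measurable (quantize b h u) := by
  have heq : quantize b h u = Set.indicator (⋃ k : ℕ, ⋃ _ : 1 ≤ k,
      Ico (h * k - b⁻¹ * (∫ s in (h * ((k : ℝ) - 1))..(h * k), u s)) (h * k))
      (fun _ => b) := by
    funext s
    by_cases hc : ∃ k : ℕ, 1 ≤ k ∧
        h * k - b⁻¹ * (∫ s in (h * ((k : ℝ) - 1))..(h * k), u s) ≤ s ∧ s < h * k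
    · rw [show quantize b h u s = b from if_pos hc, Set.indicator_of_mem]
      simp only [mem_iUnion, mem_Ico]
      obtain ⟨k, hk1, hk2, hk3⟩ := hc
      exact ⟨k, hk1, hk2, hk3⟩
    · rw [show quantize b h u s = 0 from if_neg hc, Set.indicator_of_notMem]
      simp only [mem_iUnion, mem_Ico]
      rintro ⟨k, hk1, hk2, hk3⟩
      exact hc ⟨k, hk1, hk2, hk3⟩
  rw [heq]
  exact measurable_const.indicator
    (MeasurableSet.iUnion fun k => MeasurableSet.iUnion fun _ => measurableSet_Ico)

lemma tauQ_mem (b h : ℝ) (u : ℝ → ℝ) (hb : 0 < b) (hh : 0 < h)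
    (hu : ∀ s, u s ∈ Set.Icc 0 b) (huint : MeasureTheory.IntegrableOn u (Set.Ici 0))
    (k : ℕ) (hk : 1 ≤ k) : tauQ b h u k ∈ Set.Icc 0 h := by
  set a : ℝ := h * ((k : ℝ) - 1) with ha
  set c : ℝ := h * k with hc
  have hk1 : (1 : ℝ) ≤ (k : ℝ) := by exact_mod_cast hk
  have ha0 : 0 ≤ a := by
    have : (0:ℝ) ≤ (k : ℝ) - 1 := by linarith
    positivity
  have hac : a ≤ c := by
    have : (k : ℝ) - 1 ≤ (k : ℝ) := by linarith
    exact mul_le_mul_of_nonneg_left this hh.le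
  have hint : IntervalIntegrable u volume a c := by
    rw [intervalIntegrable_iff_integrableOn_Ioc_of_le hac]
    exact huint.mono_set (fun x hx => le_trans ha0 hx.1.le)
  have h0 : 0 ≤ ∫ s in a..c, u s :=
    intervalIntegral.integral_nonneg hac (fun s _ => (hu s).1)
  have h1 : (∫ s in a..c, u s) ≤ b * h := by
    have := intervalIntegral.integral_mono_on hac hint intervalIntegrable_const
      (fun s _ => (hu s).2)
    have hcc : (∫ _ in a..c, b) = b * h := by
      rw [intervalIntegral.integral_const]
      have : c - a = h := by rw [ha, hc]; ring
      rw [this]; simp [mul_comm]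
    linarith [hcc ▸ this]
  constructor
  · exact mul_nonneg (inv_nonneg.mpr hb.le) h0
  · have : b⁻¹ * (∫ s in a..c, u s) ≤ b⁻¹ * (b * h) :=
      mul_le_mul_of_nonneg_left h1 (inv_nonneg.mpr hb.le)
    calc tauQ b h u k ≤ b⁻¹ * (b * h) := this
    _ = h := by field_simp

lemma quantize_eq_on (b h : ℝ) (u : ℝ → ℝ) (hb : 0 < b) (hh : 0 < h)
    (hu : ∀ s, u s ∈ Set.Icc 0 b) (huint : MeasureTheory.IntegrableOn u (Set.Ici 0))
    (k : ℕ) (hk : 1 ≤ k) (s : ℝ) (hs : s ∈ Set.Ico (h * ((k : ℝ) - 1)) (h * k)) :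
    quantize b h u s = if h * k - tauQ b h u k ≤ s then b else 0 := by
  unfold quantize
  by_cases hcase : h * k - tauQ b h u k ≤ s
  · rw [if_pos hcase, if_pos ⟨k, hk, hcase, hs.2⟩]
  · rw [if_neg hcase, if_neg]
    rintro ⟨j, hj1, hj2, hj3⟩
    rcases lt_trichotomy j k with hlt | heq | hgt
    · have : (j : ℝ) ≤ (k : ℝ) - 1 := by
        have : j + 1 ≤ k := hlt
        have := (Nat.cast_le (α := ℝ)).mpr this
        push_cast at this; linarith
      have : h * j ≤ h * ((k : ℝ) - 1) := mul_le_mul_of_nonneg_left this hh.le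
      exact absurd hj3 (not_lt.mpr (le_trans this hs.1))
    · subst heq; exact hcase hj2
    · have hj1' : (1:ℕ) ≤ j := le_of_lt (lt_of_le_of_lt hk hgt)
      have hτ := tauQ_mem b h u hb hh hu huint j hj1'
      have hkj : (k : ℝ) ≤ (j : ℝ) - 1 := by
        have : k + 1 ≤ j := hgt
        have := (Nat.cast_le (α := ℝ)).mpr this
        push_cast at this; linarith
      have h1 : h * k ≤ h * ((j:ℝ) - 1) := mul_le_mul_of_nonneg_left hkj hh.le
      have h2 : h * ((j:ℝ) - 1) ≤ h * j - tauQ b h u j := by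
        have := hτ.2
        nlinarith [hτ.2]
      exact absurd hj2 (not_le.mpr (lt_of_lt_of_le hs.2 (le_trans h1 h2)))

lemma integral_quantize (b h : ℝ) (u : ℝ → ℝ) (hb : 0 < b) (hh : 0 < h)
    (hu : ∀ s, u s ∈ Set.Icc 0 b) (huint : MeasureTheory.IntegrableOn u (Set.Ici 0))
    (k : ℕ) (hk : 1 ≤ k) :
    (∫ s in (h * ((k : ℝ) - 1))..(h * k), quantize b h u s) = b * tauQ b h u k := by
  set a : ℝ := h * ((k : ℝ) - 1) with ha
  set c : ℝ := h * k with hcdef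
  set τ : ℝ := tauQ b h u k with hτdef
  have hτ := tauQ_mem b h u hb hh hu huint k hk
  have hk1 : (1 : ℝ) ≤ (k : ℝ) := by exact_mod_cast hk
  have hac : a ≤ c := by
    have : (k : ℝ) - 1 ≤ (k : ℝ) := by linarith
    exact mul_le_mul_of_nonneg_left this hh.le
  have hca : c - a = h := by rw [ha, hcdef]; ring
  have hsub : Ioc (c - τ) c ⊆ Ioc a c := fun x hx => ⟨lt_of_le_of_lt (by linarith [hτ.2]) hx.1, hx.2⟩
  have hpair : (volume : Measure ℝ) ({c - τ, c} : Set ℝ) = 0 :=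
    Set.Finite.measure_zero (by simp) volume
  have hae : (fun s => quantize b h u s)
      =ᵐ[volume.restrict (Ioc a c)] (Ioc (c - τ) c).indicator (fun _ => b) := by
    have h1 : ∀ᵐ s ∂(volume.restrict (Ioc a c)), s ∉ ({c - τ, c} : Set ℝ) :=
      ae_restrict_of_ae (measure_eq_zero_iff_ae_notMem.mp hpair)
    filter_upwards [ae_restrict_mem measurableSet_Ioc, h1] with s hs hs2
    have hsne1 : s ≠ c - τ := fun hcon => hs2 (by simp [hcon])
    have hsne2 : s ≠ c := fun hcon => hs2 (by simp [hcon])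
    have hslt : s < c := lt_of_le_of_ne hs.2 hsne2
    have := quantize_eq_on b h u hb hh hu huint k hk s ⟨hs.1.le, hslt⟩
    rw [this]
    by_cases hle : c - τ ≤ s
    · rw [if_pos hle, Set.indicator_of_mem (show s ∈ Ioc (c - τ) c from ⟨lt_of_le_of_ne hle (Ne.symm hsne1), hslt.le⟩)]
    · rw [if_neg hle, Set.indicator_of_notMem]
      intro hmem; exact hle hmem.1.le
  rw [intervalIntegral.integral_of_le hac, integral_congr_ae hae,
    integral_indicator measurableSet_Ioc, Measure.restrict_restrict measurableSet_Ioc,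
    inter_eq_self_of_subset_left hsub, setIntegral_const]
  rw [measureReal_def, Real.volume_Ioc]
  have : c - (c - τ) = τ := by ring
  rw [this, ENNReal.toReal_ofReal hτ.1]
  simp [mul_comm, hτdef]

theorem stmt_11 (b h t M L : ℝ) (hb : 0 < b) (hh : 0 < h) (ht : 0 ≤ t)
    (u φ : ℝ → ℝ) (hu : ∀ s, u s ∈ Set.Icc 0 b)
    (huint : MeasureTheory.IntegrableOn u (Set.Ici 0))
    (hφbdd : ∀ s ∈ Set.Icc 0 t, |φ s| ≤ M)
    (hφlip : ∀ s₁ ∈ Set.Icc 0 t, ∀ s₂ ∈ Set.Icc 0 t,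
      |φ s₂ - φ s₁| ≤ L * |s₂ - s₁|) :
    |∫ s in (0:ℝ)..t, (quantize b h u s - u s) * φ s| ≤ b * h * (M + t * L) := by
  have hM : 0 ≤ M := le_trans (abs_nonneg _) (hφbdd 0 ⟨le_refl 0, ht⟩)
  rcases eq_or_lt_of_le ht with hteq | htpos
  · rw [← hteq]
    simp only [intervalIntegral.integral_same, abs_zero]
    have : (0:ℝ) ≤ M + 0 * L := by linarith
    positivity
  have hL : 0 ≤ L := by
    have h1 := hφlip 0 ⟨le_refl 0, ht⟩ t ⟨ht, le_refl t⟩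
    have h2 : |t - 0| = t := by rw [sub_zero, abs_of_pos htpos]
    rw [h2] at h1
    nlinarith [abs_nonneg (φ t - φ 0)]
  set N := ⌊t / h⌋₊ with hNdef
  set aa : ℕ → ℝ := fun i => h * (i : ℝ) with haa
  have hNt : aa N ≤ t := by
    have h1 : (N : ℝ) ≤ t / h := Nat.floor_le (div_nonneg ht hh.le)
    have h2 := mul_le_mul_of_nonneg_left h1 hh.le
    calc aa N = h * (N : ℝ) := rfl
    _ ≤ h * (t / h) := h2
    _ = t := by field_simp
  have htN : t - aa N ≤ h := by
    have h1 : t / h < (N : ℝ) + 1 := Nat.lt_floor_add_one (t / h)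
    have h2 : t < h * ((N : ℝ) + 1) := by
      have := mul_lt_mul_of_pos_left h1 hh
      calc t = h * (t / h) := by field_simp
      _ < h * ((N : ℝ) + 1) := this
    have : aa N = h * (N : ℝ) := rfl
    nlinarith
  have haam : ∀ i j : ℕ, i ≤ j → aa i ≤ aa j := fun i j hij =>
    mul_le_mul_of_nonneg_left (Nat.cast_le.mpr hij) hh.le
  have haa0 : ∀ i : ℕ, 0 ≤ aa i := fun i => mul_nonneg hh.le (Nat.cast_nonneg i)
  have haat : ∀ i : ℕ, i ≤ N → aa i ≤ t := fun i hi => le_trans (haam i N hi) hNt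
  -- Integrability facts on Icc 0 t
  have huI : IntegrableOn u (Set.Icc 0 t) := huint.mono_set Set.Icc_subset_Ici_self
  have hIccfin : volume (Set.Icc (0:ℝ) t) < ⊤ := measure_Icc_lt_top
  have hqI : IntegrableOn (quantize b h u) (Set.Icc 0 t) := by
    refine Integrable.mono' (g := fun _ => b)
      (integrableOn_const hIccfin.ne)
      ((quantize_measurable b h u).aestronglyMeasurable) ?_
    refine Filter.Eventually.of_forall fun s => ?_
    have hq := quantize_mem b h u hb.le s
    rw [Real.norm_eq_abs, abs_le]
    exact ⟨by linarith [hq.1], hq.2⟩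
  have hφc : ContinuousOn φ (Set.Icc 0 t) := by
    have hlip : LipschitzOnWith (Real.toNNReal L) φ (Set.Icc 0 t) := by
      apply LipschitzOnWith.of_dist_le_mul
      intro x hx y hy
      rw [Real.dist_eq, Real.dist_eq, Real.coe_toNNReal L hL]
      exact hφlip y hy x hx
    exact hlip.continuousOn
  have hφm : AEStronglyMeasurable φ (volume.restrict (Set.Icc 0 t)) :=
    hφc.aestronglyMeasurable measurableSet_Icc
  have hFm : AEStronglyMeasurable (fun s => quantize b h u s - u s)
      (volume.restrict (Set.Icc 0 t)) :=
    ((quantize_measurable b h u).aestronglyMeasurable.mono_measure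
      Measure.restrict_le_self).sub huI.aestronglyMeasurable
  have hFbd : ∀ s, |quantize b h u s - u s| ≤ b := fun s => by
    have h1 := quantize_mem b h u hb.le s
    have h2 := hu s
    rw [abs_le]
    exact ⟨by linarith [h1.1, h2.2], by linarith [h1.2, h2.1]⟩
  have hFI : IntegrableOn (fun s => quantize b h u s - u s) (Set.Icc 0 t) := hqI.sub huI
  have hgI : IntegrableOn (fun s => (quantize b h u s - u s) * φ s) (Set.Icc 0 t) := by
    refine Integrable.mono' (g := fun _ => b * M)
      (integrableOn_const hIccfin.ne) (hFm.mul hφm) ?_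
    filter_upwards [ae_restrict_mem measurableSet_Icc] with s hs
    rw [Real.norm_eq_abs, abs_mul]
    exact mul_le_mul (hFbd s) (hφbdd s hs) (abs_nonneg _) hb.le
  have hsubII : ∀ (f : ℝ → ℝ), IntegrableOn f (Set.Icc 0 t) →
      ∀ x y : ℝ, x ∈ Set.Icc 0 t → y ∈ Set.Icc 0 t → IntervalIntegrable f volume x y := by
    intro f hf x y hx hy
    exact (hf.mono_set (Set.uIcc_subset_Icc hx hy)).intervalIntegrable
  -- zero-mean property on each full interval
  have hzero : ∀ k : ℕ, k < N →
      (∫ s in (aa k)..(aa (k+1)), (quantize b h u s - u s)) = 0 := by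
    intro k hkN
    have hmem1 : aa k ∈ Set.Icc 0 t := ⟨haa0 k, haat k (le_of_lt hkN)⟩
    have hmem2 : aa (k+1) ∈ Set.Icc 0 t := ⟨haa0 (k+1), haat (k+1) hkN⟩
    have hq := integral_quantize b h u hb hh hu huint (k+1) (Nat.le_add_left 1 k)
    have hc1 : h * (((k+1 : ℕ) : ℝ) - 1) = aa k := by push_cast [haa]; ring
    have hc2 : h * ((k+1 : ℕ) : ℝ) = aa (k+1) := rfl
    rw [hc1, hc2] at hq
    have hτ : b * tauQ b h u (k+1) = ∫ s in (aa k)..(aa (k+1)), u s := by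
      unfold tauQ
      rw [hc1, hc2]
      field_simp
    rw [intervalIntegral.integral_sub (hsubII _ hqI _ _ hmem1 hmem2)
      (hsubII _ huI _ _ hmem1 hmem2), hq, hτ, sub_self]
  -- per-interval bound
  have hbound : ∀ k : ℕ, k < N →
      |∫ s in (aa k)..(aa (k+1)), (quantize b h u s - u s) * φ s| ≤ b * L * h * h := by
    intro k hkN
    have hmem1 : aa k ∈ Set.Icc 0 t := ⟨haa0 k, haat k (le_of_lt hkN)⟩
    have hmem2 : aa (k+1) ∈ Set.Icc 0 t := ⟨haa0 (k+1), haat (k+1) hkN⟩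
    have hle : aa k ≤ aa (k+1) := haam k (k+1) (Nat.le_succ k)
    have hdiff : aa (k+1) - aa k = h := by
      simp only [haa]
      push_cast
      ring
    have hIg : IntervalIntegrable (fun s => (quantize b h u s - u s) * φ s) volume
        (aa k) (aa (k+1)) := hsubII _ hgI _ _ hmem1 hmem2
    have hIF : IntervalIntegrable (fun s => quantize b h u s - u s) volume
        (aa k) (aa (k+1)) := hsubII _ hFI _ _ hmem1 hmem2
    have key : (∫ s in (aa k)..(aa (k+1)), (quantize b h u s - u s) * (φ s - φ (aa k)))
        = ∫ s in (aa k)..(aa (k+1)), (quantize b h u s - u s) * φ s := by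
      have heq : (fun s => (quantize b h u s - u s) * (φ s - φ (aa k)))
          = fun s => (quantize b h u s - u s) * φ s - φ (aa k) * (quantize b h u s - u s) := by
        funext s; ring
      rw [heq, intervalIntegral.integral_sub hIg (hIF.const_mul _),
        intervalIntegral.integral_const_mul, hzero k hkN]
      ring
    rw [← key, ← Real.norm_eq_abs]
    have hb1 : ∀ x ∈ Set.uIoc (aa k) (aa (k+1)),
        ‖(quantize b h u x - u x) * (φ x - φ (aa k))‖ ≤ b * (L * h) := by
      intro x hx
      rw [Set.uIoc_of_le hle] at hx
      have hxmem : x ∈ Set.Icc 0 t := ⟨le_trans hmem1.1 hx.1.le, le_trans hx.2 hmem2.2⟩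
      have hφd : |φ x - φ (aa k)| ≤ L * h := by
        have h1 := hφlip (aa k) hmem1 x hxmem
        have h2 : |x - aa k| ≤ h := by
          rw [abs_of_nonneg (by linarith [hx.1.le])]
          linarith [hx.2, hdiff]
        calc |φ x - φ (aa k)| ≤ L * |x - aa k| := h1
        _ ≤ L * h := mul_le_mul_of_nonneg_left h2 hL
      rw [Real.norm_eq_abs, abs_mul]
      exact mul_le_mul (hFbd x) hφd (abs_nonneg _) hb.le
    have := intervalIntegral.norm_integral_le_of_norm_le_const hb1
    have habs : |aa (k+1) - aa k| = h := by rw [hdiff, abs_of_pos hh]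
    rw [habs] at this
    calc ‖∫ s in (aa k)..(aa (k+1)), (quantize b h u s - u s) * (φ s - φ (aa k))‖
        ≤ b * (L * h) * h := this
    _ = b * L * h * h := by ring
  -- sum over full intervals
  have hadj : ∀ i : ℕ, i < N → IntervalIntegrable
      (fun s => (quantize b h u s - u s) * φ s) volume (aa i) (aa (i+1)) := by
    intro i hi
    exact hsubII _ hgI _ _ ⟨haa0 i, haat i (le_of_lt hi)⟩ ⟨haa0 (i+1), haat (i+1) hi⟩
  have hsum := intervalIntegral.sum_integral_adjacent_intervals
    (f := fun s => (quantize b h u s - u s) * φ s) (μ := volume) (a := aa) hadj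
  have haaz : aa 0 = 0 := by simp [haa]
  rw [haaz] at hsum
  have hsplit : (∫ s in (0:ℝ)..t, (quantize b h u s - u s) * φ s)
      = (∫ s in (0:ℝ)..(aa N), (quantize b h u s - u s) * φ s)
        + ∫ s in (aa N)..t, (quantize b h u s - u s) * φ s :=
    (intervalIntegral.integral_add_adjacent_intervals
      (hsubII _ hgI _ _ ⟨le_refl 0, ht⟩ ⟨haa0 N, hNt⟩)
      (hsubII _ hgI _ _ ⟨haa0 N, hNt⟩ ⟨ht, le_refl t⟩)).symm
  have h1 : |∫ s in (0:ℝ)..(aa N), (quantize b h u s - u s) * φ s|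
      ≤ (N : ℝ) * (b * L * h * h) := by
    rw [← hsum]
    calc |∑ k ∈ Finset.range N, ∫ s in (aa k)..(aa (k+1)), (quantize b h u s - u s) * φ s|
        ≤ ∑ k ∈ Finset.range N, |∫ s in (aa k)..(aa (k+1)), (quantize b h u s - u s) * φ s| :=
          Finset.abs_sum_le_sum_abs _ _
    _ ≤ ∑ _k ∈ Finset.range N, (b * L * h * h) :=
          Finset.sum_le_sum (fun i hi => hbound i (Finset.mem_range.mp hi))
    _ = (N : ℝ) * (b * L * h * h) := by
          rw [Finset.sum_const, Finset.card_range, nsmul_eq_mul]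
  have h2 : |∫ s in (aa N)..t, (quantize b h u s - u s) * φ s| ≤ b * M * h := by
    have hb2 : ∀ x ∈ Set.uIoc (aa N) t,
        ‖(quantize b h u x - u x) * φ x‖ ≤ b * M := by
      intro x hx
      rw [Set.uIoc_of_le hNt] at hx
      have hxmem : x ∈ Set.Icc 0 t := ⟨le_trans (haa0 N) hx.1.le, hx.2⟩
      rw [Real.norm_eq_abs, abs_mul]
      exact mul_le_mul (hFbd x) (hφbdd x hxmem) (abs_nonneg _) hb.le
    have := intervalIntegral.norm_integral_le_of_norm_le_const hb2
    rw [Real.norm_eq_abs] at this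
    have habs : |t - aa N| ≤ h := by
      rw [abs_of_nonneg (by linarith [hNt])]
      exact htN
    calc |∫ s in (aa N)..t, (quantize b h u s - u s) * φ s| ≤ b * M * |t - aa N| := this
    _ ≤ b * M * h := mul_le_mul_of_nonneg_left habs (by positivity)
  have hNh : (N : ℝ) * h ≤ t := by
    have : aa N = h * (N : ℝ) := rfl
    linarith [hNt, this ▸ hNt]
  calc |∫ s in (0:ℝ)..t, (quantize b h u s - u s) * φ s|
      ≤ |∫ s in (0:ℝ)..(aa N), (quantize b h u s - u s) * φ s|
        + |∫ s in (aa N)..t, (quantize b h u s - u s) * φ s| := by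
        rw [hsplit]; exact abs_add_le _ _
  _ ≤ (N : ℝ) * (b * L * h * h) + b * M * h := add_le_add h1 h2
  _ ≤ b * L * h * t + b * M * h := by
        nlinarith [mul_le_mul_of_nonneg_left hNh (mul_nonneg (mul_nonneg hb.le hL) hh.le)]
  _ = b * h * (M + t * L) := by ring
end

section
/- Lower bound for limiting susceptible share cannot exceed herd-immunity threshold: for any initial state with S(0) > γ/β and I(0) > 0 and any piecewise continuous control u with ‖u‖₁ < ∞, the limiting susceptible share satisfies S_u(∞) ≤ γ/β; consequently the total incidence 1 − S_u(∞)/S(0) is at least 1 − γ/(β·S(0)). -/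
open MeasureTheory Set Filter

theorem stmt_16 (β γ : ℝ) (hβ : 0 < β) (hγ : 0 < γ) (S I u : ℝ → ℝ) (Sinf : ℝ)
    (hSpos : ∀ t, 0 ≤ t → 0 < S t) (hIpos : ∀ t, 0 ≤ t → 0 < I t)
    (hu01 : ∀ t, u t ∈ Set.Icc (0:ℝ) 1)
    (huint : MeasureTheory.IntegrableOn u (Set.Ici 0))
    (hS : ∀ t, 0 ≤ t → HasDerivAt S (-β * (1 - u t) * S t * I t) t)
    (hI : ∀ t, 0 ≤ t → HasDerivAt I (β * (1 - u t) * S t * I t - γ * I t) t)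
    (hSanti : AntitoneOn S (Set.Ici 0))
    (hSlim : Filter.Tendsto S Filter.atTop (nhds Sinf))
    (hS0 : γ / β < S 0) :
    Sinf ≤ γ / β ∧ 1 - γ / (β * S 0) ≤ 1 - Sinf / S 0 := by
  have hS0pos : 0 < S 0 := hSpos 0 le_rfl
  have hu0 : ∀ t, 0 ≤ u t := fun t => (hu01 t).1
  have hu1 : ∀ t, u t ≤ 1 := fun t => (hu01 t).2
  have main : Sinf ≤ γ / β := by
    by_contra hc
    push_neg at hc
    have hSinfpos : 0 < Sinf := lt_trans (div_pos hγ hβ) hc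
    have hε : 0 ≤ β * Sinf - γ := by
      rw [div_lt_iff₀ hβ] at hc; nlinarith
    have hSge : ∀ t, 0 ≤ t → Sinf ≤ S t := by
      intro t ht
      refine le_of_tendsto hSlim ?_
      filter_upwards [eventually_ge_atTop t] with s hs
      exact hSanti ht (le_trans ht hs) hs
    have hSle : ∀ t, 0 ≤ t → S t ≤ S 0 := fun t ht => hSanti (Set.mem_Ici.mpr le_rfl) ht ht
    have contS : ContinuousOn S (Set.Ici 0) :=
      fun t ht => (hS t ht).continuousAt.continuousWithinAt
    have contI : ContinuousOn I (Set.Ici 0) :=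
      fun t ht => (hI t ht).continuousAt.continuousWithinAt
    set C : ℝ := ∫ t in Set.Ici (0:ℝ), u t with hCdef
    have hC0 : 0 ≤ C := setIntegral_nonneg measurableSet_Ici (fun t _ => hu0 t)
    have hintuT : ∀ T, 0 ≤ T → IntervalIntegrable u volume 0 T := by
      intro T hT
      refine (huint.mono_set ?_).intervalIntegrable
      rw [Set.uIcc_of_le hT]; exact Set.Icc_subset_Ici_self
    have huTle : ∀ T, 0 ≤ T → (∫ t in (0:ℝ)..T, u t) ≤ C := by
      intro T hT
      rw [intervalIntegral.integral_of_le hT]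
      refine setIntegral_mono_set huint (Filter.Eventually.of_forall hu0) ?_
      exact Filter.Eventually.of_forall fun x hx => hx.1.le
    -- FTC for log I
    have key1 : ∀ T, 0 ≤ T →
        Real.log (I T) - Real.log (I 0) = ∫ t in (0:ℝ)..T, (β * (1 - u t) * S t - γ) := by
      intro T hT
      refine (intervalIntegral.integral_eq_sub_of_hasDerivAt
        (f := fun s => Real.log (I s)) (f' := fun t => β * (1 - u t) * S t - γ) ?_ ?_).symm
      · intro t ht
        rw [Set.uIcc_of_le hT] at ht
        have ht0 := ht.1
        have hIt := hIpos t ht0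
        have h := (hI t ht0).log hIt.ne'
        refine h.congr_deriv ?_
        rw [div_eq_iff hIt.ne']
        ring
      · have heq : (fun t => β * (1 - u t) * S t - γ)
            = fun t => (β * S t - γ) - β * (u t * S t) := by funext t; ring
        rw [heq]
        have hIcc : Set.uIcc (0:ℝ) T ⊆ Set.Ici 0 := by
          rw [Set.uIcc_of_le hT]; exact Set.Icc_subset_Ici_self
        refine IntervalIntegrable.sub ?_ (((hintuT T hT).mul_continuousOn
          (contS.mono hIcc)).const_mul β)
        exact (((contS.mono hIcc).const_smul β).sub continuousOn_const).intervalIntegrable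
    -- lower bound for the log I integral
    have comp1 : ∀ T, 0 ≤ T →
        (β * Sinf - γ) * T - β * S 0 * C ≤ Real.log (I T) - Real.log (I 0) := by
      intro T hT
      rw [key1 T hT]
      have hIcc : Set.uIcc (0:ℝ) T ⊆ Set.Ici 0 := by
        rw [Set.uIcc_of_le hT]; exact Set.Icc_subset_Ici_self
      have hlow : IntervalIntegrable (fun t => (β * Sinf - γ) - β * S 0 * u t) volume 0 T :=
        intervalIntegrable_const.sub ((hintuT T hT).const_mul (β * S 0))
      have hup : IntervalIntegrable (fun t => β * (1 - u t) * S t - γ) volume 0 T := by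
        have heq : (fun t => β * (1 - u t) * S t - γ)
            = fun t => (β * S t - γ) - β * (u t * S t) := by funext t; ring
        rw [heq]
        refine IntervalIntegrable.sub ?_ (((hintuT T hT).mul_continuousOn
          (contS.mono hIcc)).const_mul β)
        exact (((contS.mono hIcc).const_smul β).sub continuousOn_const).intervalIntegrable
      have hmono := intervalIntegral.integral_mono_on hT hlow hup ?_
      · have hcalc : (∫ t in (0:ℝ)..T, ((β * Sinf - γ) - β * S 0 * u t))
            = (β * Sinf - γ) * T - β * S 0 * (∫ t in (0:ℝ)..T, u t) := by
          rw [intervalIntegral.integral_sub intervalIntegrable_const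
            ((hintuT T hT).const_mul (β * S 0)),
            intervalIntegral.integral_const, intervalIntegral.integral_const_mul]
          simp [mul_comm]
        rw [hcalc] at hmono
        have hu' : β * S 0 * (∫ t in (0:ℝ)..T, u t) ≤ β * S 0 * C :=
          mul_le_mul_of_nonneg_left (huTle T hT) (by positivity)
        linarith
      · intro t ht
        have ht0 := ht.1
        have h1 : Sinf ≤ S t := hSge t ht0
        have h2 : S t ≤ S 0 := hSle t ht0
        have h3 : 0 ≤ u t := hu0 t
        nlinarith [mul_nonneg (mul_nonneg hβ.le h3) (sub_nonneg.mpr h2),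
          mul_nonneg hβ.le (sub_nonneg.mpr h1)]
    -- consequence: I is bounded below
    set m : ℝ := I 0 * Real.exp (-(β * S 0 * C)) with hmdef
    have hm : 0 < m := mul_pos (hIpos 0 le_rfl) (Real.exp_pos _)
    have hIm : ∀ T, 0 ≤ T → m ≤ I T := by
      intro T hT
      have h1 := comp1 T hT
      have h2 : Real.log (I 0) - β * S 0 * C ≤ Real.log (I T) := by
        nlinarith [mul_nonneg hε hT]
      have hme : m = Real.exp (Real.log (I 0) - β * S 0 * C) := by
        rw [sub_eq_add_neg, Real.exp_add, Real.exp_log (hIpos 0 le_rfl)]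
      rw [hme, ← Real.exp_log (hIpos T hT)]
      exact Real.exp_le_exp.mpr h2
    -- FTC for log S
    have key2 : ∀ T, 0 ≤ T →
        Real.log (S T) - Real.log (S 0) = ∫ t in (0:ℝ)..T, (-β * (1 - u t) * I t) := by
      intro T hT
      refine (intervalIntegral.integral_eq_sub_of_hasDerivAt
        (f := fun s => Real.log (S s)) (f' := fun t => -β * (1 - u t) * I t) ?_ ?_).symm
      · intro t ht
        rw [Set.uIcc_of_le hT] at ht
        have ht0 := ht.1
        have hSt := hSpos t ht0
        have h := (hS t ht0).log hSt.ne'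
        refine h.congr_deriv ?_
        rw [div_eq_iff hSt.ne']
        ring
      · have heq : (fun t => -β * (1 - u t) * I t)
            = fun t => (-(β * I t)) + β * (u t * I t) := by funext t; ring
        rw [heq]
        have hIcc : Set.uIcc (0:ℝ) T ⊆ Set.Ici 0 := by
          rw [Set.uIcc_of_le hT]; exact Set.Icc_subset_Ici_self
        refine IntervalIntegrable.add ?_ (((hintuT T hT).mul_continuousOn
          (contI.mono hIcc)).const_mul β)
        exact (((contI.mono hIcc).const_smul β).neg).intervalIntegrable
    have comp2 : ∀ T, 0 ≤ T →
        Real.log (S T) - Real.log (S 0) ≤ -(β * m) * T + β * m * C := by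
      intro T hT
      rw [key2 T hT]
      have hIcc : Set.uIcc (0:ℝ) T ⊆ Set.Ici 0 := by
        rw [Set.uIcc_of_le hT]; exact Set.Icc_subset_Ici_self
      have hlow : IntervalIntegrable (fun t => -β * (1 - u t) * I t) volume 0 T := by
        have heq : (fun t => -β * (1 - u t) * I t)
            = fun t => (-(β * I t)) + β * (u t * I t) := by funext t; ring
        rw [heq]
        refine IntervalIntegrable.add ?_ (((hintuT T hT).mul_continuousOn
          (contI.mono hIcc)).const_mul β)
        exact (((contI.mono hIcc).const_smul β).neg).intervalIntegrable
      have hup : IntervalIntegrable (fun t => -(β * m) + β * m * u t) volume 0 T :=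
        intervalIntegrable_const.add ((hintuT T hT).const_mul (β * m))
      have hmono := intervalIntegral.integral_mono_on hT hlow hup ?_
      · have hcalc : (∫ t in (0:ℝ)..T, (-(β * m) + β * m * u t))
            = -(β * m) * T + β * m * (∫ t in (0:ℝ)..T, u t) := by
          rw [intervalIntegral.integral_add intervalIntegrable_const
            ((hintuT T hT).const_mul (β * m)),
            intervalIntegral.integral_const, intervalIntegral.integral_const_mul]
          simp [mul_comm]
        rw [hcalc] at hmono
        have hu' : β * m * (∫ t in (0:ℝ)..T, u t) ≤ β * m * C :=
          mul_le_mul_of_nonneg_left (huTle T hT) (by positivity)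
        linarith
      · intro t ht
        have ht0 := ht.1
        have h1 : m ≤ I t := hIm t ht0
        have h2 : u t ≤ 1 := hu1 t
        nlinarith [mul_le_mul_of_nonneg_left h1 (mul_nonneg hβ.le (sub_nonneg.mpr h2))]
    -- derive a contradiction by taking T large
    set T : ℝ := max 0 ((Real.log (S 0) + β * m * C - Real.log Sinf + 1) / (β * m)) with hTdef
    have hT0 : 0 ≤ T := le_max_left _ _
    have hTbig : Real.log (S 0) + β * m * C - Real.log Sinf + 1 ≤ β * m * T := by
      have : (Real.log (S 0) + β * m * C - Real.log Sinf + 1) / (β * m) ≤ T := le_max_right _ _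
      rw [div_le_iff₀ (by positivity)] at this
      linarith [this]
    have hlogSinf : Real.log Sinf ≤ Real.log (S T) :=
      Real.log_le_log hSinfpos (hSge T hT0)
    have := comp2 T hT0
    nlinarith
  refine ⟨main, ?_⟩
  have h1 : Sinf / S 0 ≤ γ / β / S 0 := by gcongr
  rw [div_div] at h1
  linarith
end

section
/- Final size equation for the uncontrolled SIR model: with S(0), I(0) > 0 and S(0) > γ/β, the limit S(∞) of the susceptible share is the unique solution in (0, γ/β) of the equation x − (γ/β)·log x = S(0) + I(0) − (γ/β)·log S(0). -/
theorem stmt_17 (β γ : ℝ) (hβ : 0 < β) (hγ : 0 < γ) (S I : ℝ → ℝ) (Sinf : ℝ)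
    (hSpos : ∀ t, 0 ≤ t → 0 < S t) (hIpos : ∀ t, 0 ≤ t → 0 < I t)
    (hS : ∀ t, 0 ≤ t → HasDerivAt S (-β * S t * I t) t)
    (hI : ∀ t, 0 ≤ t → HasDerivAt I (β * S t * I t - γ * I t) t)
    (hS0 : γ / β < S 0)
    (hSlim : Filter.Tendsto S Filter.atTop (nhds Sinf))
    (hSinfle : Sinf ≤ γ / β)
    (hIlim : Filter.Tendsto I Filter.atTop (nhds 0)) :
    Sinf ∈ Set.Ioo 0 (γ / β) ∧
    Sinf - (γ / β) * Real.log Sinf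
      = S 0 + I 0 - (γ / β) * Real.log (S 0) ∧
    ∀ x ∈ Set.Ioo (0:ℝ) (γ / β),
      x - (γ / β) * Real.log x = S 0 + I 0 - (γ / β) * Real.log (S 0) → x = Sinf := by
  set c := γ / β with hc_def
  have hc : 0 < c := div_pos hγ hβ
  have hβ' : β ≠ 0 := ne_of_gt hβ
  set g : ℝ → ℝ := fun t => S t + I t - c * Real.log (S t) with hg_def
  -- the conserved quantity has zero derivative
  have hgderiv : ∀ t, 0 ≤ t → HasDerivAt g 0 t := by
    intro t ht
    have hSne : S t ≠ 0 := ne_of_gt (hSpos t ht)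
    have h2 : HasDerivAt (fun u => Real.log (S u)) ((-β * S t * I t) / S t) t :=
      (hS t ht).log hSne
    have h3 := ((hS t ht).add (hI t ht)).sub (h2.const_mul c)
    have h4 : -β * S t * I t + (β * S t * I t - γ * I t) - c * (-β * S t * I t / S t) = 0 := by
      rw [hc_def]
      field_simp
      ring
    rw [h4] at h3
    exact h3
  -- hence constant on [0, ∞)
  have hconst : ∀ t, 0 ≤ t → g t = g 0 := by
    intro t ht
    have hcont : ContinuousOn g (Set.Ici 0) := fun x hx =>
      ((hgderiv x hx).continuousAt).continuousWithinAt
    have hd : ∀ x ∈ interior (Set.Ici (0:ℝ)),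
        HasDerivWithinAt g 0 (interior (Set.Ici (0:ℝ))) x := by
      intro x hx
      rw [interior_Ici] at hx ⊢
      exact (hgderiv x (le_of_lt hx)).hasDerivWithinAt
    have hmono : MonotoneOn g (Set.Ici 0) :=
      monotoneOn_of_hasDerivWithinAt_nonneg (convex_Ici 0) hcont hd (fun x _ => le_rfl)
    have hanti : AntitoneOn g (Set.Ici 0) :=
      antitoneOn_of_hasDerivWithinAt_nonpos (convex_Ici 0) hcont hd (fun x _ => le_rfl)
    exact le_antisymm (hanti Set.self_mem_Ici ht ht) (hmono Set.self_mem_Ici ht ht)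
  -- S t - c log S t tends to g 0
  have hh : Filter.Tendsto (fun t => S t - c * Real.log (S t)) Filter.atTop (nhds (g 0)) := by
    have h1 : Filter.Tendsto (fun t => g t - I t) Filter.atTop (nhds (g 0 - 0)) := by
      refine Filter.Tendsto.sub ?_ hIlim
      refine Filter.Tendsto.congr' ?_ tendsto_const_nhds
      filter_upwards [Filter.eventually_ge_atTop (0:ℝ)] with t ht
      exact (hconst t ht).symm
    rw [sub_zero] at h1
    refine h1.congr (fun t => ?_)
    simp only [hg_def]; ring
  -- Sinf ≥ 0
  have hSinfge : (0:ℝ) ≤ Sinf :=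
    ge_of_tendsto hSlim (Filter.eventually_atTop.mpr ⟨0, fun t ht => (hSpos t ht).le⟩)
  -- Sinf > 0
  have hSinfpos : 0 < Sinf := by
    rcases hSinfge.lt_or_eq with h | h
    · exact h
    · exfalso
      have hS0' : Filter.Tendsto S Filter.atTop (nhdsWithin 0 (Set.Ioi 0)) := by
        rw [tendsto_nhdsWithin_iff]
        exact ⟨h ▸ hSlim, Filter.eventually_atTop.mpr ⟨0, fun t ht => hSpos t ht⟩⟩
      have hlog : Filter.Tendsto (fun t => Real.log (S t)) Filter.atTop Filter.atBot :=
        Real.tendsto_log_nhdsGT_zero.comp hS0'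
      have htop : Filter.Tendsto (fun t => S t - c * Real.log (S t)) Filter.atTop Filter.atTop := by
        have h2 : Filter.Tendsto (fun t => -(c * Real.log (S t))) Filter.atTop Filter.atTop := by
          have h3 := hlog.const_mul_atBot hc
          exact Filter.tendsto_neg_atBot_atTop.comp h3
        have := (h ▸ hSlim : Filter.Tendsto S Filter.atTop (nhds 0)).add_atTop h2
        refine this.congr (fun t => ?_)
        ring
      exact not_tendsto_atTop_of_tendsto_nhds hh htop
  -- the final size equation
  have hkey : Sinf - c * Real.log Sinf = g 0 := by
    have hlogcont : Filter.Tendsto (fun t => Real.log (S t)) Filter.atTop (nhds (Real.log Sinf)) :=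
      (Real.continuousAt_log (ne_of_gt hSinfpos)).tendsto.comp hSlim
    exact tendsto_nhds_unique (hSlim.sub (hlogcont.const_mul c)) hh
  have hg0 : g 0 = S 0 + I 0 - c * Real.log (S 0) := rfl
  -- properties of f x = x - c log x
  set f : ℝ → ℝ := fun x => x - c * Real.log x with hf_def
  have hfderiv : ∀ x : ℝ, x ≠ 0 → HasDerivAt f (1 - c / x) x := by
    intro x hx
    have := (hasDerivAt_id x).sub ((Real.hasDerivAt_log hx).const_mul c)
    rw [div_eq_mul_inv]; exact this
  have hfanti : StrictAntiOn f (Set.Ioc 0 c) := by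
    refine strictAntiOn_of_hasDerivWithinAt_neg (f' := fun x => 1 - c / x) (convex_Ioc 0 c)
      (fun x hx => ((hfderiv x (ne_of_gt hx.1)).continuousAt).continuousWithinAt)
      (fun x hx => ?_) (fun x hx => ?_)
    · rw [interior_Ioc] at hx
      exact (hfderiv x (ne_of_gt hx.1)).hasDerivWithinAt
    · rw [interior_Ioc] at hx
      have : 1 < c / x := (one_lt_div hx.1).mpr hx.2
      linarith
  have hfmono : StrictMonoOn f (Set.Ici c) := by
    refine strictMonoOn_of_hasDerivWithinAt_pos (f' := fun x => 1 - c / x) (convex_Ici c)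
      (fun x hx => ((hfderiv x (ne_of_gt (lt_of_lt_of_le hc hx))).continuousAt).continuousWithinAt)
      (fun x hx => ?_) (fun x hx => ?_)
    · rw [interior_Ici] at hx
      exact (hfderiv x (ne_of_gt (lt_trans hc hx))).hasDerivWithinAt
    · rw [interior_Ici] at hx
      have : c / x < 1 := (div_lt_one (lt_trans hc hx)).mpr hx
      linarith
  have hfS0 : f c < f (S 0) := hfmono Set.self_mem_Ici (Set.mem_Ici.mpr hS0.le) hS0
  have hfSinf : f Sinf = f (S 0) + I 0 := by
    rw [hf_def]; simp only []
    rw [hkey, hg0]; ring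
  have hfSinf_gt : f c < f Sinf := by
    have := hIpos 0 le_rfl
    rw [hfSinf]; linarith
  have hSinflt : Sinf < c := by
    rcases hSinfle.lt_or_eq with h | h
    · exact h
    · exact absurd (h ▸ hfSinf_gt) (lt_irrefl _)
  refine ⟨⟨hSinfpos, hSinflt⟩, by rw [← hg0]; exact hkey, ?_⟩
  intro x hx hxeq
  have hx' : x ∈ Set.Ioc 0 c := ⟨hx.1, hx.2.le⟩
  have hSinf' : Sinf ∈ Set.Ioc 0 c := ⟨hSinfpos, hSinflt.le⟩
  have : f x = f Sinf := by
    rw [hf_def]; simp only []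
    rw [hkey, hg0]; exact hxeq
  exact hfanti.injOn hx' hSinf' this
end

section
/- Monotone comparison of controls: if u₁ ≤ u₂ pointwise and u₁ is nondecreasing, then the limiting susceptible shares of the corresponding controlled SIR epidemics with the same initial state satisfy S_{u₁}(∞) ≤ S_{u₂}(∞). In particular, taking u₁ = 0, any control u yields S_0(∞) ≤ S_u(∞), so total incidence under u is at most 1 − S_0(∞)/S(0). -/
open MeasureTheory Set Filter intervalIntegral Topology

lemma intInt_of_bdd {f : ℝ → ℝ} (hm : Measurable f) {a b C : ℝ}
    (h : ∀ t ∈ Set.uIcc a b, |f t| ≤ C) : IntervalIntegrable f volume a b := by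
  rw [intervalIntegrable_iff]
  apply Measure.integrableOn_of_bounded (M := C)
  · exact ((measure_Ioc_lt_top (a := min a b) (b := max a b))).ne
  · exact hm.aestronglyMeasurable
  · filter_upwards [ae_restrict_mem measurableSet_uIoc] with t ht
    exact h t (uIoc_subset_uIcc ht)

lemma abel_bound {τ : ℝ} (hτ : 0 < τ) (v g G : ℝ → ℝ) (B : ℝ)
    (hvmono : MonotoneOn v (Icc 0 τ)) (hv1 : ∀ t ∈ Icc 0 τ, 1 ≤ v t)
    (hvmeas : Measurable v) (hgmeas : Measurable g)
    (hgB : ∀ t ∈ Icc 0 τ, |g t| ≤ B)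
    (hG : ∀ t ∈ Icc 0 τ, HasDerivAt G (g t) t)
    (hGm : ∀ r ∈ Icc 0 τ, G τ ≤ G r) :
    ∫ t in (0:ℝ)..τ, v t * g t ≤ v 0 * (G τ - G 0) := by
  have h0m : (0:ℝ) ∈ Icc 0 τ := ⟨le_rfl, hτ.le⟩
  have hτm : τ ∈ Icc (0:ℝ) τ := ⟨hτ.le, le_rfl⟩
  have hB0 : 0 ≤ B := le_trans (abs_nonneg _) (hgB 0 h0m)
  have hvτ : ∀ t ∈ Icc (0:ℝ) τ, v t ≤ v τ := fun t ht => hvmono ht hτm ht.2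
  have hvpos : ∀ t ∈ Icc (0:ℝ) τ, 0 < v t := fun t ht => lt_of_lt_of_le one_pos (hv1 t ht)
  set c := v 0 * (G τ - G 0) with hc
  -- integrability of v*g and of g on subintervals of [0,τ]
  have hsub : ∀ a ∈ Icc (0:ℝ) τ, ∀ b ∈ Icc (0:ℝ) τ, Set.uIcc a b ⊆ Icc 0 τ := by
    intro a ha b hb t ht
    rw [Set.mem_uIcc] at ht
    rcases ht with ⟨h1, h2⟩ | ⟨h1, h2⟩
    · exact ⟨le_trans ha.1 h1, le_trans h2 hb.2⟩
    · exact ⟨le_trans hb.1 h1, le_trans h2 ha.2⟩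
  have hint_vg : ∀ a ∈ Icc (0:ℝ) τ, ∀ b ∈ Icc (0:ℝ) τ,
      IntervalIntegrable (fun t => v t * g t) volume a b := by
    intro a ha b hb
    apply intInt_of_bdd (hvmeas.mul hgmeas) (C := v τ * B)
    intro t ht
    have ht' := hsub a ha b hb ht
    show |v t * g t| ≤ _
    rw [abs_mul, abs_of_pos (hvpos t ht')]
    exact mul_le_mul (hvτ t ht') (hgB t ht') (abs_nonneg _) (le_trans one_pos.le (hv1 τ hτm))
  have hint_g : ∀ a ∈ Icc (0:ℝ) τ, ∀ b ∈ Icc (0:ℝ) τ,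
      IntervalIntegrable g volume a b := by
    intro a ha b hb
    apply intInt_of_bdd hgmeas (C := B)
    intro t ht; exact hgB t (hsub a ha b hb ht)
  have key : ∀ n : ℕ, 1 ≤ n → (∫ t in (0:ℝ)..τ, v t * g t) ≤ c + B * τ * (v τ - v 0) / n := by
    intro n hn
    have hnpos : (0:ℝ) < n := by exact_mod_cast hn
    set δ := τ / n with hδ
    have hδpos : 0 < δ := div_pos hτ hnpos
    set p : ℕ → ℝ := fun i => i * δ with hp
    have hpn : p n = τ := by simp only [hp, hδ]; field_simp [hnpos.ne']
    have hp0 : p 0 = 0 := by simp [hp]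
    have hpmem : ∀ i ≤ n, p i ∈ Icc (0:ℝ) τ := by
      intro i hi
      constructor
      · positivity
      · rw [← hpn]
        have : (i:ℝ) ≤ n := by exact_mod_cast hi
        exact mul_le_mul_of_nonneg_right this hδpos.le
    have hple : ∀ i, p i ≤ p (i + 1) := by
      intro i
      have : (i:ℝ) ≤ (i:ℝ) + 1 := by linarith
      simpa [hp] using mul_le_mul_of_nonneg_right (by push_cast; linarith : (i:ℝ) ≤ ((i:ℕ)+1:ℕ)) hδpos.le
    have hsplit : (∫ t in (0:ℝ)..τ, v t * g t)
        = ∑ i ∈ Finset.range n, ∫ t in (p i)..(p (i+1)), v t * g t := by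
      rw [intervalIntegral.sum_integral_adjacent_intervals (fun k hk =>
        hint_vg _ (hpmem k hk.le) _ (hpmem (k+1) hk))]
      rw [hp0, hpn]
    have hcell : ∀ i ∈ Finset.range n, (∫ t in (p i)..(p (i+1)), v t * g t)
        ≤ v (p i) * (G (p (i+1)) - G (p i)) + B * (v (p (i+1)) - v (p i)) * δ := by
      intro i hi
      have hi' := Finset.mem_range.1 hi
      have hmi := hpmem i hi'.le
      have hmi1 := hpmem (i+1) hi'
      have hFTC : (∫ t in (p i)..(p (i+1)), g t) = G (p (i+1)) - G (p i) := by
        apply intervalIntegral.integral_eq_sub_of_hasDerivAt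
        · intro x hx; exact hG x (hsub _ hmi _ hmi1 hx)
        · exact hint_g _ hmi _ hmi1
      have hconst : (∫ t in (p i)..(p (i+1)), v (p i) * g t)
          = v (p i) * (G (p (i+1)) - G (p i)) := by
        rw [intervalIntegral.integral_const_mul, hFTC]
      have hdiff : (∫ t in (p i)..(p (i+1)), v t * g t)
          = v (p i) * (G (p (i+1)) - G (p i))
            + ∫ t in (p i)..(p (i+1)), (v t - v (p i)) * g t := by
        rw [show (fun t => (v t - v (p i)) * g t) = fun t => v t * g t - v (p i) * g t from
          funext fun t => by ring]
        rw [intervalIntegral.integral_sub (hint_vg _ hmi _ hmi1)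
          ((hint_g _ hmi _ hmi1).const_mul _), hconst]
        ring
      have hrem : ‖∫ t in (p i)..(p (i+1)), (v t - v (p i)) * g t‖
          ≤ (v (p (i+1)) - v (p i)) * B * |p (i+1) - p i| := by
        apply intervalIntegral.norm_integral_le_of_norm_le_const
        intro x hx
        rw [Set.uIoc_of_le (hple i)] at hx
        have hxm : x ∈ Icc (0:ℝ) τ := ⟨le_trans hmi.1 hx.1.le, le_trans hx.2 hmi1.2⟩
        have h1 : v (p i) ≤ v x := hvmono hmi hxm hx.1.le
        have h2 : v x ≤ v (p (i+1)) := hvmono hxm hmi1 hx.2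
        rw [Real.norm_eq_abs, abs_mul, abs_of_nonneg (by linarith : (0:ℝ) ≤ v x - v (p i))]
        exact mul_le_mul (by linarith) (hgB x hxm) (abs_nonneg _) (by linarith)
      have habs : |p (i+1) - p i| = δ := by
        rw [abs_of_nonneg (by linarith [hple i])]
        simp [hp]; ring
      rw [hdiff]
      rw [Real.norm_eq_abs, habs] at hrem
      have := (le_abs_self _).trans hrem
      nlinarith
    have hsum : (∫ t in (0:ℝ)..τ, v t * g t)
        ≤ ∑ i ∈ Finset.range n, (v (p i) * (G (p (i+1)) - G (p i)) + B * (v (p (i+1)) - v (p i)) * δ) := by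
      rw [hsplit]; exact Finset.sum_le_sum hcell
    have habel : ∑ i ∈ Finset.range n, v (p i) * (G (p (i+1)) - G (p i)) ≤ c := by
      have hterm : ∀ i ∈ Finset.range n, v (p i) * (G (p (i+1)) - G (p i))
          ≤ v (p (i+1)) * (G (p (i+1)) - G τ) - v (p i) * (G (p i) - G τ) := by
        intro i hi
        have hi' := Finset.mem_range.1 hi
        have h1 : v (p i) ≤ v (p (i+1)) := hvmono (hpmem i hi'.le) (hpmem (i+1) hi') (hple i)
        have h2 : G τ ≤ G (p (i+1)) := hGm _ (hpmem (i+1) hi')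
        nlinarith
      have htel : ∑ i ∈ Finset.range n, (v (p (i+1)) * (G (p (i+1)) - G τ)
            - v (p i) * (G (p i) - G τ))
          = v (p n) * (G (p n) - G τ) - v (p 0) * (G (p 0) - G τ) := by
        simpa using Finset.sum_range_sub (fun j => v (p j) * (G (p j) - G τ)) n
      calc ∑ i ∈ Finset.range n, v (p i) * (G (p (i+1)) - G (p i))
          ≤ ∑ i ∈ Finset.range n, (v (p (i+1)) * (G (p (i+1)) - G τ)
              - v (p i) * (G (p i) - G τ)) := Finset.sum_le_sum hterm
        _ = v (p n) * (G (p n) - G τ) - v (p 0) * (G (p 0) - G τ) := htel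
        _ = c := by rw [hpn, hp0, hc]; ring
    have hΔv : ∑ i ∈ Finset.range n, B * (v (p (i+1)) - v (p i)) * δ
        = B * (v τ - v 0) * δ := by
      have h1 : ∑ i ∈ Finset.range n, B * (v (p (i+1)) - v (p i)) * δ
          = (B * δ) * ∑ i ∈ Finset.range n, (v (p (i+1)) - v (p i)) := by
        rw [Finset.mul_sum]; congr 1; ext i; ring
      have h2 : ∑ i ∈ Finset.range n, (v (p (i+1)) - v (p i)) = v (p n) - v (p 0) := by
        simpa using Finset.sum_range_sub (fun j => v (p j)) n
      rw [h1, h2, hpn, hp0]; ring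
    rw [Finset.sum_add_distrib, hΔv] at hsum
    have : B * (v τ - v 0) * δ = B * τ * (v τ - v 0) / n := by rw [hδ]; ring
    linarith [habel, hsum, this.le, this.ge]
  have hlim : Tendsto (fun n : ℕ => c + B * τ * (v τ - v 0) / n) atTop (𝓝 c) := by
    have h1 : Tendsto (fun n : ℕ => B * τ * (v τ - v 0) / n) atTop (𝓝 0) :=
      tendsto_const_div_atTop_nhds_zero_nat _
    simpa using tendsto_const_nhds.add h1
  exact ge_of_tendsto hlim (eventually_atTop.2 ⟨1, fun n hn => key n hn⟩)


lemma SI_bound (β γ : ℝ) (hγ : 0 < γ) (u S I : ℝ → ℝ)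
    (hIpos : ∀ t, 0 ≤ t → 0 < I t)
    (hS : ∀ t, 0 ≤ t → HasDerivAt S (-β * (1 - u t) * S t * I t) t)
    (hI : ∀ t, 0 ≤ t → HasDerivAt I (β * (1 - u t) * S t * I t - γ * I t) t) :
    ∀ t, 0 ≤ t → S t + I t ≤ S 0 + I 0 := by
  intro t ht
  have hd : ∀ s ∈ Set.uIcc (0:ℝ) t, HasDerivAt (fun r => S r + I r) (-γ * I s) s := by
    intro s hs
    rw [Set.uIcc_of_le ht] at hs
    have h := (hS s hs.1).add (hI s hs.1)
    exact h.congr_deriv (by ring)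
  have hcont : ContinuousOn (fun s => -γ * I s) (Set.uIcc 0 t) := by
    intro s hs
    rw [Set.uIcc_of_le ht] at hs
    exact (continuousAt_const.mul (hI s hs.1).differentiableAt.continuousAt).continuousWithinAt
  have hFTC := intervalIntegral.integral_eq_sub_of_hasDerivAt hd (hcont.intervalIntegrable)
  have hnp : (∫ s in (0:ℝ)..t, -γ * I s) ≤ 0 := by
    rw [intervalIntegral.integral_of_le ht]
    apply MeasureTheory.integral_nonpos_of_ae
    filter_upwards [ae_restrict_mem measurableSet_Ioc] with s hs
    have := hIpos s hs.1.le
    simp only [Pi.zero_apply]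
    nlinarith
  linarith [hFTC ▸ hnp]

set_option maxHeartbeats 4000000 in
lemma barrier (β γ : ℝ) (hβ : 0 < β) (hγ : 0 < γ)
    (u₁ u₂ : ℝ → ℝ) (S₁ I₁ S₂ I₂ : ℝ → ℝ)
    (hu₁01 : ∀ t, u₁ t ∈ Set.Icc (0:ℝ) 1) (hu₂01 : ∀ t, u₂ t ∈ Set.Icc (0:ℝ) 1)
    (hle : ∀ t, u₁ t ≤ u₂ t) (hmono : Monotone u₁)
    (hinit0 : S₁ 0 = S₂ 0) (hinit1 : I₁ 0 = I₂ 0)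
    (hSpos₁ : ∀ t, 0 ≤ t → 0 < S₁ t) (hSpos₂ : ∀ t, 0 ≤ t → 0 < S₂ t)
    (hIpos₁ : ∀ t, 0 ≤ t → 0 < I₁ t) (hIpos₂ : ∀ t, 0 ≤ t → 0 < I₂ t)
    (hS₁ : ∀ t, 0 ≤ t → HasDerivAt S₁ (-β * (1 - u₁ t) * S₁ t * I₁ t) t)
    (hI₁ : ∀ t, 0 ≤ t → HasDerivAt I₁ (β * (1 - u₁ t) * S₁ t * I₁ t - γ * I₁ t) t)
    (hS₂ : ∀ t, 0 ≤ t → HasDerivAt S₂ (-β * (1 - u₂ t) * S₂ t * I₂ t) t)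
    (hI₂ : ∀ t, 0 ≤ t → HasDerivAt I₂ (β * (1 - u₂ t) * S₂ t * I₂ t - γ * I₂ t) t)
    (T : ℝ) (hT : 0 < T) (hu1lt : ∀ s, s ∈ Set.Icc (0:ℝ) T → u₁ s < 1) :
    ∀ t, t ∈ Set.Icc (0:ℝ) T → 0 ≤ Real.log (S₂ t) - Real.log (S₁ t) := by
  set M : ℝ := S₁ 0 + I₁ 0 with hM
  set G : ℝ → ℝ := fun t => Real.log (S₂ t) - Real.log (S₁ t) with hG
  set K : ℝ := β * M + γ with hK
  -- bounds
  have hMb₁ : ∀ t, 0 ≤ t → S₁ t + I₁ t ≤ M := SI_bound β γ hγ u₁ S₁ I₁ hIpos₁ hS₁ hI₁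
  have hMb₂ : ∀ t, 0 ≤ t → S₂ t + I₂ t ≤ M := by
    intro t ht
    have := SI_bound β γ hγ u₂ S₂ I₂ hIpos₂ hS₂ hI₂ t ht
    rw [← hinit0, ← hinit1] at this; exact this
  have hI₁M : ∀ t, 0 ≤ t → I₁ t ≤ M := fun t ht => by nlinarith [hSpos₁ t ht, hMb₁ t ht]
  have hI₂M : ∀ t, 0 ≤ t → I₂ t ≤ M := fun t ht => by nlinarith [hSpos₂ t ht, hMb₂ t ht]
  have hS₁M : ∀ t, 0 ≤ t → S₁ t ≤ M := fun t ht => by nlinarith [hIpos₁ t ht, hMb₁ t ht]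
  have hS₂M : ∀ t, 0 ≤ t → S₂ t ≤ M := fun t ht => by nlinarith [hIpos₂ t ht, hMb₂ t ht]
  have hMpos : 0 < M := by nlinarith [hSpos₁ 0 le_rfl, hIpos₁ 0 le_rfl]
  have hKpos : 0 < K := by nlinarith
  -- derivative of G
  have hGd : ∀ t, 0 ≤ t → HasDerivAt G
      (β * ((1 - u₁ t) * I₁ t - (1 - u₂ t) * I₂ t)) t := by
    intro t ht
    have h2 : HasDerivAt (fun s => Real.log (S₂ s))
        ((-β * (1 - u₂ t) * S₂ t * I₂ t) / S₂ t) t := (hS₂ t ht).log (hSpos₂ t ht).ne'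
    have h1 : HasDerivAt (fun s => Real.log (S₁ s))
        ((-β * (1 - u₁ t) * S₁ t * I₁ t) / S₁ t) t := (hS₁ t ht).log (hSpos₁ t ht).ne'
    have h := h2.sub h1
    refine h.congr_deriv ?_
    field_simp [(hSpos₁ t ht).ne', (hSpos₂ t ht).ne']
    ring
  have hG0 : G 0 = 0 := by rw [hG]; simp [hinit0]
  have hgd : ∀ t, 0 ≤ t → deriv G t = β * ((1 - u₁ t) * I₁ t - (1 - u₂ t) * I₂ t) :=
    fun t ht => (hGd t ht).deriv
  have hgB : ∀ t, 0 ≤ t → |deriv G t| ≤ 2 * β * M := by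
    intro t ht
    rw [hgd t ht, abs_le]
    have h1 := hIpos₁ t ht; have h2 := hIpos₂ t ht
    have h3 := hI₁M t ht; have h4 := hI₂M t ht
    have h5 := (hu₁01 t).1; have h6 := (hu₁01 t).2
    have h7 := (hu₂01 t).1; have h8 := (hu₂01 t).2
    have e1 : 0 ≤ (1 - u₁ t) * I₁ t := mul_nonneg (by linarith) h1.le
    have e2 : (1 - u₁ t) * I₁ t ≤ M := by nlinarith
    have e3 : 0 ≤ (1 - u₂ t) * I₂ t := mul_nonneg (by linarith) h2.le
    have e4 : (1 - u₂ t) * I₂ t ≤ M := by nlinarith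
    constructor <;> nlinarith
  have hgmeas : Measurable (deriv G) := measurable_deriv G
  have hGcont : ∀ t, 0 ≤ t → ContinuousAt G t := fun t ht => (hGd t ht).differentiableAt.continuousAt
  -- main ε-claim
  have Cl : ∀ ε : ℝ, 0 < ε → ∀ t ∈ Set.Icc (0:ℝ) T, -G t ≤ ε * Real.exp ((K+1)*t) := by
    intro ε hε
    by_contra hcon
    push_neg at hcon
    obtain ⟨t₀, ht₀, ht₀'⟩ := hcon
    set A : Set ℝ := {s | s ∈ Set.Icc (0:ℝ) T ∧ ε * Real.exp ((K+1)*s) ≤ -G s} with hA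
    have hAne : A.Nonempty := ⟨t₀, ht₀, ht₀'.le⟩
    have hAbdd : BddBelow A := ⟨0, fun s hs => hs.1.1⟩
    set τ := sInf A with hτdef
    have hτicc : τ ∈ Set.Icc (0:ℝ) T := by
      constructor
      · exact le_csInf hAne (fun s hs => hs.1.1)
      · exact le_trans (csInf_le hAbdd hAne.choose_spec) hAne.choose_spec.1.2
    have hτcl : τ ∈ closure A := csInf_mem_closure hAne hAbdd
    -- φ τ ≤ 0 by closure
    have hφτ : ε * Real.exp ((K+1)*τ) ≤ -G τ := by
      have hc : ContinuousAt (fun s => ε * Real.exp ((K+1)*s) + G s) τ := by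
        exact (continuousAt_const.mul (Real.continuous_exp.continuousAt.comp
          (continuousAt_const.mul continuousAt_id))).add (hGcont τ hτicc.1)
      have : Tendsto (fun s => ε * Real.exp ((K+1)*s) + G s) (𝓝[A] τ)
          (𝓝 (ε * Real.exp ((K+1)*τ) + G τ)) := hc.continuousWithinAt.tendsto
      have hnb : (𝓝[A] τ).NeBot := mem_closure_iff_nhdsWithin_neBot.1 hτcl
      have hle0 : ∀ᶠ s in 𝓝[A] τ, (fun s => ε * Real.exp ((K+1)*s) + G s) s ≤ 0 := by
        filter_upwards [self_mem_nhdsWithin] with s hs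
        linarith [hs.2]
      linarith [le_of_tendsto this hle0]
    have hτpos : 0 < τ := by
      rcases hτicc.1.eq_or_lt with h|h
      · exfalso
        have : ε * Real.exp ((K+1)*(0:ℝ)) ≤ -G 0 := by rw [h]; exact hφτ
        rw [hG0] at this; simp at this
        nlinarith [Real.exp_pos ((K+1)*(0:ℝ))]
      · exact h
    have hbτpos : 0 < ε * Real.exp ((K+1)*τ) := by positivity
    have hGτneg : G τ < 0 := by nlinarith
    -- points before τ are not in A
    have hnotA : ∀ s, 0 ≤ s → s < τ → -G s < ε * Real.exp ((K+1)*s) := by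
      intro s hs0 hsτ
      by_contra hcon2
      push_neg at hcon2
      have : s ∈ A := ⟨⟨hs0, le_trans hsτ.le hτicc.2⟩, hcon2⟩
      exact absurd (csInf_le hAbdd this) (not_le.2 hsτ)
    -- G τ is the min of G on [0,τ]
    have hGm : ∀ r ∈ Set.Icc (0:ℝ) τ, G τ ≤ G r := by
      intro r hr
      rcases hr.2.eq_or_lt with h|h
      · rw [h]
      · have h1 := hnotA r hr.1 h
        have h2 : ε * Real.exp ((K+1)*r) ≤ ε * Real.exp ((K+1)*τ) := by
          have : (K+1)*r ≤ (K+1)*τ := by nlinarith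
          exact mul_le_mul_of_nonneg_left (Real.exp_le_exp.2 this) hε.le
        linarith
    -- equality at τ : -G τ = ε exp((K+1)τ) by left continuity
    have hfeq : -G τ = ε * Real.exp ((K+1)*τ) := by
      have hc : ContinuousAt (fun s => -G s - ε * Real.exp ((K+1)*s)) τ := by
        exact ((hGcont τ hτicc.1).neg).sub (continuousAt_const.mul
          (Real.continuous_exp.continuousAt.comp (continuousAt_const.mul continuousAt_id)))
      have ht : Tendsto (fun s => -G s - ε * Real.exp ((K+1)*s)) (𝓝[<] τ)
          (𝓝 (-G τ - ε * Real.exp ((K+1)*τ))) := hc.tendsto.mono_left nhdsWithin_le_nhds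
      have hev : ∀ᶠ s in 𝓝[<] τ, -G s - ε * Real.exp ((K+1)*s) ≤ 0 := by
        filter_upwards [Ico_mem_nhdsLT hτpos] with s hs
        linarith [hnotA s hs.1 hs.2]
      have := le_of_tendsto ht hev
      linarith
    -- subset relation
    have hsubτ : ∀ s ∈ Set.Icc (0:ℝ) τ, s ∈ Set.Icc (0:ℝ) T :=
      fun s hs => ⟨hs.1, le_trans hs.2 hτicc.2⟩
    -- apply abel bound with v = (1-u₁)⁻¹
    set v : ℝ → ℝ := fun t => (1 - u₁ t)⁻¹ with hv
    have hw₁pos : ∀ s ∈ Set.Icc (0:ℝ) τ, 0 < 1 - u₁ s := by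
      intro s hs; linarith [hu1lt s (hsubτ s hs)]
    have habel : ∫ t in (0:ℝ)..τ, v t * deriv G t ≤ G τ := by
      have h := abel_bound hτpos v (deriv G) G (2*β*M)
        (by -- MonotoneOn
          intro a ha b hb hab
          have h1 := hw₁pos a ha; have h2 := hw₁pos b hb
          have h3 : 1 - u₁ b ≤ 1 - u₁ a := by linarith [hmono hab]
          exact inv_anti₀ h2 h3)
        (by intro t ht; exact (one_le_inv₀ (hw₁pos t ht)).2 (by linarith [(hu₁01 t).1]))
        ((measurable_const.sub hmono.measurable).inv)
        hgmeas
        (fun t ht => hgB t ht.1)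
        (fun t ht => (hGd t ht.1).differentiableAt.hasDerivAt)
        hGm
      rw [hG0, sub_zero] at h
      have hv0 : 1 ≤ v 0 := (one_le_inv₀ (hw₁pos 0 ⟨le_rfl, hτpos.le⟩)).2 (by linarith [(hu₁01 0).1])
      nlinarith
    -- pointwise : β (I₁ - I₂) ≤ v * deriv G on [0,τ]
    have hpt : ∀ t ∈ Set.Icc (0:ℝ) τ, β * (I₁ t - I₂ t) ≤ v t * deriv G t := by
      intro t ht
      have hw := hw₁pos t ht
      have heq : v t * deriv G t - β * (I₁ t - I₂ t)
          = β * I₂ t * ((1 - u₁ t) - (1 - u₂ t)) / (1 - u₁ t) := by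
        rw [hgd t ht.1, hv]
        field_simp
        ring
      have hge : 0 ≤ β * I₂ t * ((1 - u₁ t) - (1 - u₂ t)) / (1 - u₁ t) := by
        apply div_nonneg _ hw.le
        exact mul_nonneg (mul_nonneg hβ.le (hIpos₂ t ht.1).le) (by linarith [hle t])
      linarith [hge, heq.ge, heq.le]
    -- integral comparison
    have hIcont : ContinuousOn (fun s => β * (I₁ s - I₂ s)) (Set.uIcc 0 τ) := by
      intro s hs
      rw [Set.uIcc_of_le hτpos.le] at hs
      exact (continuousAt_const.mul
        (((hI₁ s hs.1).differentiableAt.continuousAt).sub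
          ((hI₂ s hs.1).differentiableAt.continuousAt))).continuousWithinAt
    have hvg_int : IntervalIntegrable (fun t => v t * deriv G t) volume 0 τ := by
      apply intInt_of_bdd (((measurable_const.sub hmono.measurable).inv).mul hgmeas)
        (C := v τ * (2*β*M))
      intro t ht
      rw [Set.uIcc_of_le hτpos.le] at ht
      show |v t * deriv G t| ≤ _
      rw [abs_mul]
      have h1 : 0 < v t := inv_pos.2 (hw₁pos t ht)
      have h2 : v t ≤ v τ := by
        have h3 : 1 - u₁ τ ≤ 1 - u₁ t := by linarith [hmono ht.2]
        exact inv_anti₀ (hw₁pos τ ⟨hτpos.le, le_rfl⟩) h3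
      rw [abs_of_pos h1]
      exact mul_le_mul h2 (hgB t ht.1) (abs_nonneg _) (le_trans h1.le h2)
    have hI_int : IntervalIntegrable (fun s => β * (I₁ s - I₂ s)) volume 0 τ :=
      hIcont.intervalIntegrable
    have hint2 : β * ∫ t in (0:ℝ)..τ, (I₁ t - I₂ t) ≤ G τ := by
      rw [← intervalIntegral.integral_const_mul]
      exact le_trans (intervalIntegral.integral_mono_on hτpos.le hI_int hvg_int hpt) habel
    -- identity  I₁ τ - I₂ τ = (S₂ τ - S₁ τ) - γ ∫₀^τ (I₁ - I₂)
    set D : ℝ → ℝ := fun t => I₁ t - I₂ t with hDdef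
    set E : ℝ → ℝ := fun t => S₂ t - S₁ t with hEdef
    have hD : ∀ t, 0 ≤ t → HasDerivAt D ((β * (1 - u₁ t) * S₁ t * I₁ t - γ * I₁ t)
        - (β * (1 - u₂ t) * S₂ t * I₂ t - γ * I₂ t)) t :=
      fun t ht => (hI₁ t ht).sub (hI₂ t ht)
    have hE : ∀ t, 0 ≤ t → HasDerivAt E ((-β * (1 - u₂ t) * S₂ t * I₂ t)
        - (-β * (1 - u₁ t) * S₁ t * I₁ t)) t :=
      fun t ht => (hS₂ t ht).sub (hS₁ t ht)
    have hdD : ∀ t, 0 ≤ t → deriv D t = (β * (1 - u₁ t) * S₁ t * I₁ t - γ * I₁ t)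
        - (β * (1 - u₂ t) * S₂ t * I₂ t - γ * I₂ t) := fun t ht => (hD t ht).deriv
    have hdE : ∀ t, 0 ≤ t → deriv E t = (-β * (1 - u₂ t) * S₂ t * I₂ t)
        - (-β * (1 - u₁ t) * S₁ t * I₁ t) := fun t ht => (hE t ht).deriv
    have hb1 : ∀ (i : Fin 2) t, 0 ≤ t → 0 ≤ (1 - (if i.1 = 0 then u₁ else u₂) t) *
        (if i.1 = 0 then S₁ else S₂) t * ((if i.1 = 0 then I₁ else I₂) t) := by
      intro i t ht
      fin_cases i <;> simp <;>
        [exact mul_nonneg (mul_nonneg (by linarith [(hu₁01 t).2]) (hSpos₁ t ht).le) (hIpos₁ t ht).le;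
         exact mul_nonneg (mul_nonneg (by linarith [(hu₂01 t).2]) (hSpos₂ t ht).le) (hIpos₂ t ht).le]
    have hbSI₁ : ∀ t, 0 ≤ t → 0 ≤ (1 - u₁ t) * S₁ t * I₁ t ∧ (1 - u₁ t) * S₁ t * I₁ t ≤ M * M := by
      intro t ht
      have h1 := (hSpos₁ t ht); have h2 := hIpos₁ t ht
      have h3 := hS₁M t ht; have h4 := hI₁M t ht
      have h5 := (hu₁01 t).1; have h6 := (hu₁01 t).2
      have hSI : 0 ≤ S₁ t * I₁ t := (mul_pos h1 h2).le
      have hSIM : S₁ t * I₁ t ≤ M * M := mul_le_mul h3 h4 h2.le (h1.le.trans h3)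
      constructor
      · exact mul_nonneg (mul_nonneg (by linarith) h1.le) h2.le
      · nlinarith [mul_nonneg h5 hSI]
    have hbSI₂ : ∀ t, 0 ≤ t → 0 ≤ (1 - u₂ t) * S₂ t * I₂ t ∧ (1 - u₂ t) * S₂ t * I₂ t ≤ M * M := by
      intro t ht
      have h1 := (hSpos₂ t ht); have h2 := hIpos₂ t ht
      have h3 := hS₂M t ht; have h4 := hI₂M t ht
      have h5 := (hu₂01 t).1; have h6 := (hu₂01 t).2
      have hSI : 0 ≤ S₂ t * I₂ t := (mul_pos h1 h2).le
      have hSIM : S₂ t * I₂ t ≤ M * M := mul_le_mul h3 h4 h2.le (h1.le.trans h3)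
      constructor
      · exact mul_nonneg (mul_nonneg (by linarith) h1.le) h2.le
      · nlinarith [mul_nonneg h5 hSI]
    have hDbd : ∀ t, 0 ≤ t → |deriv D t| ≤ 2 * (β * (M * M) + γ * M) := by
      intro t ht
      rw [hdD t ht, abs_le]
      obtain ⟨e1, e2⟩ := hbSI₁ t ht
      obtain ⟨e3, e4⟩ := hbSI₂ t ht
      have h2 := hIpos₁ t ht; have h3 := hIpos₂ t ht
      have h4 := hI₁M t ht; have h5 := hI₂M t ht
      constructor <;> nlinarith
    have hEbd : ∀ t, 0 ≤ t → |deriv E t| ≤ 2 * (β * (M * M)) := by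
      intro t ht
      rw [hdE t ht, abs_le]
      obtain ⟨e1, e2⟩ := hbSI₁ t ht
      obtain ⟨e3, e4⟩ := hbSI₂ t ht
      constructor <;> nlinarith
    have hDint : IntervalIntegrable (deriv D) volume 0 τ := by
      apply intInt_of_bdd (measurable_deriv D) (C := 2 * (β * (M * M) + γ * M))
      intro t ht; rw [Set.uIcc_of_le hτpos.le] at ht; exact hDbd t ht.1
    have hEint : IntervalIntegrable (deriv E) volume 0 τ := by
      apply intInt_of_bdd (measurable_deriv E) (C := 2 * (β * (M * M)))
      intro t ht; rw [Set.uIcc_of_le hτpos.le] at ht; exact hEbd t ht.1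
    have hFTCD : (∫ t in (0:ℝ)..τ, deriv D t) = D τ := by
      rw [intervalIntegral.integral_eq_sub_of_hasDerivAt
        (fun x hx => by
          rw [Set.uIcc_of_le hτpos.le] at hx
          exact (hD x hx.1).differentiableAt.hasDerivAt) hDint]
      have : D 0 = 0 := by rw [hDdef]; simp [hinit1]
      rw [this, sub_zero]
    have hFTCE : (∫ t in (0:ℝ)..τ, deriv E t) = E τ := by
      rw [intervalIntegral.integral_eq_sub_of_hasDerivAt
        (fun x hx => by
          rw [Set.uIcc_of_le hτpos.le] at hx
          exact (hE x hx.1).differentiableAt.hasDerivAt) hEint]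
      have : E 0 = 0 := by rw [hEdef]; simp [hinit0]
      rw [this, sub_zero]
    have hEqOn : Set.EqOn (fun t => deriv D t - deriv E t) (fun t => -γ * (I₁ t - I₂ t))
        (Set.uIcc 0 τ) := by
      intro t ht
      rw [Set.uIcc_of_le hτpos.le] at ht
      simp only
      rw [hdD t ht.1, hdE t ht.1]
      ring
    have hid : D τ = E τ - γ * ∫ t in (0:ℝ)..τ, (I₁ t - I₂ t) := by
      have h1 : (∫ t in (0:ℝ)..τ, (deriv D t - deriv E t))
          = ∫ t in (0:ℝ)..τ, -γ * (I₁ t - I₂ t) := intervalIntegral.integral_congr hEqOn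
      rw [intervalIntegral.integral_sub hDint hEint, hFTCD, hFTCE,
        intervalIntegral.integral_const_mul] at h1
      linarith [h1]
    -- lower bound on E τ
    have hexp : Real.exp (G τ) = S₂ τ / S₁ τ := by
      rw [hG]
      simp only
      rw [Real.exp_sub, Real.exp_log (hSpos₂ τ hτicc.1), Real.exp_log (hSpos₁ τ hτicc.1)]
    have hS2τ : S₂ τ = S₁ τ * Real.exp (G τ) := by
      rw [hexp]
      field_simp [(hSpos₁ τ hτicc.1).ne']
    have hEτ : M * G τ ≤ E τ := by
      have h1 : G τ + 1 ≤ Real.exp (G τ) := Real.add_one_le_exp _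
      have h2 := hSpos₁ τ hτicc.1
      have h3 := hS₁M τ hτicc.1
      have h4 : E τ = S₁ τ * (Real.exp (G τ) - 1) := by rw [hEdef]; simp only; rw [hS2τ]; ring
      nlinarith
    -- lower bound on β * D τ
    have hDτ : (β * M - γ) * G τ ≤ β * D τ := by
      have e1 : γ * (β * ∫ t in (0:ℝ)..τ, (I₁ t - I₂ t)) ≤ γ * G τ :=
        mul_le_mul_of_nonneg_left hint2 hγ.le
      have e2 : β * (M * G τ) ≤ β * E τ := mul_le_mul_of_nonneg_left hEτ hβ.le
      have e3 : β * D τ = β * E τ - γ * (β * ∫ t in (0:ℝ)..τ, (I₁ t - I₂ t)) := by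
        rw [hid]; ring
      nlinarith [e1, e2, e3]
    -- derivative bound at τ
    have hdG : -deriv G τ ≤ K * (-G τ) := by
      have h0 : deriv G τ = β * ((1 - u₁ τ) * I₁ τ - (1 - u₂ τ) * I₂ τ) := hgd τ hτicc.1
      have h1 : β * (1 - u₂ τ) * D τ ≤ deriv G τ := by
        rw [h0]
        simp only [hDdef]
        have e1 := hIpos₁ τ hτicc.1
        have e2 : 1 - u₂ τ ≤ 1 - u₁ τ := by linarith [hle τ]
        have e3 : 0 ≤ 1 - u₂ τ := by linarith [(hu₂01 τ).2]
        nlinarith [mul_nonneg (mul_nonneg hβ.le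
          (by linarith : (0:ℝ) ≤ (1 - u₁ τ) - (1 - u₂ τ))) e1.le]
      have e5 : γ * G τ < 0 := mul_neg_of_pos_of_neg hγ hGτneg
      rw [hK]
      have hexpand : (β * M + γ) * (-G τ) = -(β * M * G τ) - γ * G τ := by ring
      have hBMG : β * M * G τ < 0 := mul_neg_of_pos_of_neg (mul_pos hβ hMpos) hGτneg
      rcases le_or_gt 0 (D τ) with h|h
      · have h6 : 0 ≤ β * (1 - u₂ τ) * D τ :=
          mul_nonneg (mul_nonneg hβ.le (by linarith [(hu₂01 τ).2])) h
        linarith [h1, h6, e5, hBMG, hexpand.le, hexpand.ge]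
      · have e3 : 0 ≤ 1 - u₂ τ := by linarith [(hu₂01 τ).2]
        have h2 : β * D τ ≤ β * (1 - u₂ τ) * D τ := by
          have hp : 0 ≤ β * u₂ τ * (-D τ) :=
            mul_nonneg (mul_nonneg hβ.le (by linarith [(hu₂01 τ).1] : (0:ℝ) ≤ u₂ τ))
              (by linarith : (0:ℝ) ≤ -D τ)
          have hq : β * (1 - u₂ τ) * D τ - β * D τ = β * u₂ τ * (-D τ) := by ring
          linarith [hp, hq.le, hq.ge]
        have hDτ' : β * M * G τ - γ * G τ ≤ β * D τ := by
          have hq : (β * M - γ) * G τ = β * M * G τ - γ * G τ := by ring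
          linarith [hDτ, hq.le, hq.ge]
        linarith [h1, h2, hDτ', e5, hexpand.le, hexpand.ge]
    -- slope inequality at τ from the left
    have hψd : HasDerivAt (fun s => -G s - ε * Real.exp ((K+1)*s))
        (-(β * ((1 - u₁ τ) * I₁ τ - (1 - u₂ τ) * I₂ τ)) - ε * (Real.exp ((K+1)*τ) * (K+1))) τ := by
      have he1 : HasDerivAt (fun s : ℝ => (K+1)*s) (K+1) τ := by
        simpa using (hasDerivAt_id τ).const_mul (K+1)
      have he2 : HasDerivAt (fun s : ℝ => Real.exp ((K+1)*s))
          (Real.exp ((K+1)*τ) * (K+1)) τ := (Real.hasDerivAt_exp ((K+1)*τ)).comp τ he1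
      exact ((hGd τ hτicc.1).neg).sub (he2.const_mul ε)
    have hψτ : (-G τ - ε * Real.exp ((K+1)*τ)) = 0 := by linarith [hfeq]
    have hslope : 0 ≤ -(β * ((1 - u₁ τ) * I₁ τ - (1 - u₂ τ) * I₂ τ))
        - ε * (Real.exp ((K+1)*τ) * (K+1)) := by
      have hW := (hψd.hasDerivWithinAt (s := Set.Iio τ))
      rw [hasDerivWithinAt_iff_tendsto_slope' (notMem_Iio.2 le_rfl)] at hW
      apply ge_of_tendsto hW
      filter_upwards [Ico_mem_nhdsLT hτpos] with y hy
      have hy1 : -G y - ε * Real.exp ((K+1)*y) < 0 := by linarith [hnotA y hy.1 hy.2]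
      rw [slope_def_field]
      apply div_nonneg_of_nonpos
      · rw [hψτ]; linarith
      · linarith [hy.2]
    have hfinal : deriv G τ = β * ((1 - u₁ τ) * I₁ τ - (1 - u₂ τ) * I₂ τ) := hgd τ hτicc.1
    have hKG : (K+1) * (-G τ) ≤ -deriv G τ := by
      rw [hfinal]
      have : ε * Real.exp ((K+1)*τ) = -G τ := hfeq.symm
      nlinarith [hslope]
    nlinarith [hbτpos, hdG, hKG, hfeq]
  -- conclude : 0 ≤ G on [0,T]
  intro t htm
  by_contra hneg
  push_neg at hneg
  have hGt : G t < 0 := hneg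
  set ε := (-G t) / (2 * Real.exp ((K+1)*t)) with hε
  have hexp_pos := Real.exp_pos ((K+1)*t)
  have hεpos : 0 < ε := by
    apply div_pos (by linarith) (by positivity)
  have := Cl ε hεpos t htm
  rw [hε] at this
  have h2 : (-G t) / (2 * Real.exp ((K+1)*t)) * Real.exp ((K+1)*t) = (-G t)/2 := by
    field_simp
  rw [h2] at this
  linarith


set_option maxHeartbeats 1000000 in
theorem stmt_18 (β γ : ℝ) (hβ : 0 < β) (hγ : 0 < γ)
    (u₁ u₂ : ℝ → ℝ) (S₁ I₁ S₂ I₂ : ℝ → ℝ) (Sinf₁ Sinf₂ : ℝ)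
    (hu₁01 : ∀ t, u₁ t ∈ Set.Icc (0:ℝ) 1) (hu₂01 : ∀ t, u₂ t ∈ Set.Icc (0:ℝ) 1)
    (hle : ∀ t, u₁ t ≤ u₂ t) (hmono : Monotone u₁)
    (hinit0 : S₁ 0 = S₂ 0) (hinit1 : I₁ 0 = I₂ 0)
    (hS0 : 0 < S₁ 0) (hI0 : 0 < I₁ 0)
    (hSpos₁ : ∀ t, 0 ≤ t → 0 < S₁ t) (hSpos₂ : ∀ t, 0 ≤ t → 0 < S₂ t)
    (hIpos₁ : ∀ t, 0 ≤ t → 0 < I₁ t) (hIpos₂ : ∀ t, 0 ≤ t → 0 < I₂ t)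
    (hS₁ : ∀ t, 0 ≤ t → HasDerivAt S₁ (-β * (1 - u₁ t) * S₁ t * I₁ t) t)
    (hI₁ : ∀ t, 0 ≤ t → HasDerivAt I₁ (β * (1 - u₁ t) * S₁ t * I₁ t - γ * I₁ t) t)
    (hS₂ : ∀ t, 0 ≤ t → HasDerivAt S₂ (-β * (1 - u₂ t) * S₂ t * I₂ t) t)
    (hI₂ : ∀ t, 0 ≤ t → HasDerivAt I₂ (β * (1 - u₂ t) * S₂ t * I₂ t - γ * I₂ t) t)
    (hSlim₁ : Filter.Tendsto S₁ Filter.atTop (nhds Sinf₁))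
    (hSlim₂ : Filter.Tendsto S₂ Filter.atTop (nhds Sinf₂)) :
    Sinf₁ ≤ Sinf₂ ∧ 1 - Sinf₂ / S₁ 0 ≤ 1 - Sinf₁ / S₁ 0 := by
  set G : ℝ → ℝ := fun t => Real.log (S₂ t) - Real.log (S₁ t) with hGdef
  set M : ℝ := S₁ 0 + I₁ 0 with hM
  have hG0 : G 0 = 0 := by rw [hGdef]; simp [hinit0]
  -- bounds
  have hMb₁ : ∀ t, 0 ≤ t → S₁ t + I₁ t ≤ M := SI_bound β γ hγ u₁ S₁ I₁ hIpos₁ hS₁ hI₁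
  have hMb₂ : ∀ t, 0 ≤ t → S₂ t + I₂ t ≤ M := by
    intro t ht
    have h := SI_bound β γ hγ u₂ S₂ I₂ hIpos₂ hS₂ hI₂ t ht
    rw [hM, hinit0, hinit1]; exact h
  have hI₁M : ∀ t, 0 ≤ t → I₁ t ≤ M := fun t ht => by nlinarith [hSpos₁ t ht, hMb₁ t ht]
  have hI₂M : ∀ t, 0 ≤ t → I₂ t ≤ M := fun t ht => by nlinarith [hSpos₂ t ht, hMb₂ t ht]
  -- derivative of G
  have hGd : ∀ t, 0 ≤ t → HasDerivAt G
      (β * ((1 - u₁ t) * I₁ t - (1 - u₂ t) * I₂ t)) t := by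
    intro t ht
    have h2 : HasDerivAt (fun s => Real.log (S₂ s))
        ((-β * (1 - u₂ t) * S₂ t * I₂ t) / S₂ t) t := (hS₂ t ht).log (hSpos₂ t ht).ne'
    have h1 : HasDerivAt (fun s => Real.log (S₁ s))
        ((-β * (1 - u₁ t) * S₁ t * I₁ t) / S₁ t) t := (hS₁ t ht).log (hSpos₁ t ht).ne'
    have h := h2.sub h1
    refine h.congr_deriv ?_
    field_simp [(hSpos₁ t ht).ne', (hSpos₂ t ht).ne']
    ring
  have hgd : ∀ t, 0 ≤ t → deriv G t = β * ((1 - u₁ t) * I₁ t - (1 - u₂ t) * I₂ t) :=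
    fun t ht => (hGd t ht).deriv
  have hgB : ∀ t, 0 ≤ t → |deriv G t| ≤ 2 * β * M := by
    intro t ht
    rw [hgd t ht, abs_le]
    have h1 := hIpos₁ t ht; have h2 := hIpos₂ t ht
    have h3 := hI₁M t ht; have h4 := hI₂M t ht
    have h5 := (hu₁01 t).1; have h6 := (hu₁01 t).2
    have h7 := (hu₂01 t).1; have h8 := (hu₂01 t).2
    have e1 : 0 ≤ (1 - u₁ t) * I₁ t := mul_nonneg (by linarith) h1.le
    have e2 : (1 - u₁ t) * I₁ t ≤ M := by nlinarith
    have e3 : 0 ≤ (1 - u₂ t) * I₂ t := mul_nonneg (by linarith) h2.le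
    have e4 : (1 - u₂ t) * I₂ t ≤ M := by nlinarith
    constructor <;> nlinarith
  have hgmeas : Measurable (deriv G) := measurable_deriv G
  -- core positivity
  have key : ∀ t, 0 ≤ t → S₁ t ≤ S₂ t := by
    intro t ht
    have hGnn : 0 ≤ G t := by
      rcases ht.eq_or_lt with h0|htpos
      · rw [← h0, hG0]
      by_cases hP : ∃ s, s ∈ Set.Icc (0:ℝ) t ∧ u₁ s = 1
      · -- control reaches 1 : G is eventually constant
        set Q : Set ℝ := {s | s ∈ Set.Icc (0:ℝ) t ∧ u₁ s = 1} with hQ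
        have hQne : Q.Nonempty := hP
        have hbdd : BddBelow Q := ⟨0, fun s hs => hs.1.1⟩
        set tb := sInf Q with htb
        have htb0 : 0 ≤ tb := le_csInf hQne fun s hs => hs.1.1
        have htbt : tb ≤ t := le_trans (csInf_le hbdd hQne.choose_spec) hQne.choose_spec.1.2
        have hone : ∀ s, tb < s → s ≤ t → u₁ s = 1 := by
          intro s hs1 hs2
          obtain ⟨r, hrQ, hr⟩ := exists_lt_of_csInf_lt hQne hs1
          exact le_antisymm (hu₁01 s).2 (hrQ.2 ▸ hmono hr.le)
        have hu2one : ∀ s, tb < s → s ≤ t → u₂ s = 1 := fun s h1 h2 =>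
          le_antisymm (hu₂01 s).2 ((hone s h1 h2) ▸ hle s)
        have hgd0 : ∀ s, tb < s → s ≤ t → deriv G s = 0 := by
          intro s h1 h2
          rw [hgd s (le_trans htb0 h1.le), hone s h1 h2, hu2one s h1 h2]
          ring
        have hconst : G t = G tb := by
          rcases htbt.eq_or_lt with he|hlt
          · rw [he]
          · have hint : IntervalIntegrable (deriv G) volume tb t := by
              apply intInt_of_bdd hgmeas (C := 2*β*M)
              intro x hx
              rw [Set.uIcc_of_le htbt] at hx
              exact hgB x (le_trans htb0 hx.1)
            have hFTC : (∫ s in tb..t, deriv G s) = G t - G tb := by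
              apply intervalIntegral.integral_eq_sub_of_hasDerivAt
              · intro x hx
                rw [Set.uIcc_of_le htbt] at hx
                exact (hGd x (le_trans htb0 hx.1)).differentiableAt.hasDerivAt
              · exact hint
            have hzero : (∫ s in tb..t, deriv G s) = 0 := by
              rw [intervalIntegral.integral_of_le htbt]
              apply MeasureTheory.integral_eq_zero_of_ae
              filter_upwards [ae_restrict_mem measurableSet_Ioc] with x hx
              simp only [Pi.zero_apply]
              exact hgd0 x hx.1 hx.2
            linarith [hFTC, hzero]
        have hGtb : 0 ≤ G tb := by
          rcases htb0.eq_or_lt with he|hpos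
          · rw [← he, hG0]
          · have hcont : ContinuousAt G tb := (hGd tb htb0).differentiableAt.continuousAt
            have htt : Tendsto G (𝓝[<] tb) (𝓝 (G tb)) :=
              hcont.tendsto.mono_left nhdsWithin_le_nhds
            apply ge_of_tendsto htt
            filter_upwards [Ico_mem_nhdsLT hpos] with s hs
            rcases hs.1.eq_or_lt with he2|hspos
            · rw [← he2, hG0]
            · have hlt1 : ∀ r, r ∈ Set.Icc (0:ℝ) s → u₁ r < 1 := by
                intro r hr
                rcases eq_or_lt_of_le (hu₁01 r).2 with h1|h1
                · exfalso
                  have hrQ : r ∈ Q := ⟨⟨hr.1, le_trans hr.2 (le_trans hs.2.le htbt)⟩, h1⟩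
                  have := csInf_le hbdd hrQ
                  linarith [hr.2, hs.2]
                · exact h1
              exact barrier β γ hβ hγ u₁ u₂ S₁ I₁ S₂ I₂ hu₁01 hu₂01 hle hmono hinit0 hinit1
                hSpos₁ hSpos₂ hIpos₁ hIpos₂ hS₁ hI₁ hS₂ hI₂ s hspos hlt1 s ⟨hs.1, le_rfl⟩
        linarith [hconst, hGtb]
      · push_neg at hP
        have hlt1 : ∀ s, s ∈ Set.Icc (0:ℝ) t → u₁ s < 1 :=
          fun s hs => lt_of_le_of_ne (hu₁01 s).2 (hP s hs)
        exact barrier β γ hβ hγ u₁ u₂ S₁ I₁ S₂ I₂ hu₁01 hu₂01 hle hmono hinit0 hinit1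
          hSpos₁ hSpos₂ hIpos₁ hIpos₂ hS₁ hI₁ hS₂ hI₂ t htpos hlt1 t ⟨ht, le_rfl⟩
    have h1 := hSpos₁ t ht
    have h2 := hSpos₂ t ht
    exact (Real.log_le_log_iff h1 h2).1 (by rw [hGdef] at hGnn; simp at hGnn; linarith [hGnn])
  have hfst : Sinf₁ ≤ Sinf₂ :=
    le_of_tendsto_of_tendsto hSlim₁ hSlim₂ ((eventually_ge_atTop (0:ℝ)).mono key)
  refine ⟨hfst, ?_⟩
  have hd : Sinf₁ / S₁ 0 ≤ Sinf₂ / S₁ 0 := by gcongr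
  linarith
end
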